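/- arXiv:2511.21148 — 8 statements merged into one kernel-verified Lean document; each statement's English description precedes it below -/
import Mathlib

section
/- Let X be a set endowed with an action of a group G, and let A, B ⊆ X. Then A and B are G-equidecomposable if and only if A and B satisfy Hall's condition with respect to G. Moreover, if Hall's condition holds with a given finite set F ⊆ G, then A and B are equidecomposable using only actions of elements of F, and conversely, if A and B are equidecomposable using only actions of elements of a finite set F ⊆ G, then Hall's condition holds with this same set F. -/
open Pointwise

/-- `P` is a partition of `A` into finitely many (possibly empty) pieces. -/
def IsPartitionOf {X : Type*} {n : ℕ} (P : Fin n → Set X) (A : Set X) : Prop :=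
  (⋃ i, P i) = A ∧ Pairwise (Function.onFun Disjoint P)

/-- `A` and `B` are `G`-equidecomposable using only actions of elements of `F`. -/
def EquidecomposableUsing {X G : Type*} [Group G] [MulAction G X]
    (F : Finset G) (A B : Set X) : Prop :=
  ∃ (n : ℕ) (P : Fin n → Set X) (g : Fin n → G),
    (∀ i, g i ∈ F) ∧ IsPartitionOf P A ∧ IsPartitionOf (fun i => g i • P i) B

/-- `A` and `B` are `G`-equidecomposable. -/
def Equidecomposable {X G : Type*} [Group G] [MulAction G X] (A B : Set X) : Prop :=
  ∃ F : Finset G, EquidecomposableUsing F A B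

/-- Hall's condition for `A, B ⊆ X` with respect to the finite set `F ⊆ G`. -/
def HallCondition {X G : Type*} [Group G] [MulAction G X]
    (F : Finset G) (A B : Set X) : Prop :=
  (∀ S : Finset X, ↑S ⊆ A → S.card ≤ (((F : Set G) • (S : Set X)) ∩ B).ncard) ∧
  (∀ T : Finset X, ↑T ⊆ B → T.card ≤ (((F : Set G)⁻¹ • (T : Set X)) ∩ A).ncard)

theorem csb_or {α β : Type*} (f : α → β) (g : β → α)
    (hf : Function.Injective f) (hg : Function.Injective g) :
    ∃ h : α → β, Function.Bijective h ∧ ∀ a, h a = f a ∨ g (h a) = a := by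
  classical
  cases isEmpty_or_nonempty β with
  | inl hβ =>
    haveI : IsEmpty α := ⟨fun a => (hβ.false (f a))⟩
    exact ⟨f, ⟨hf, fun b => (hβ.false b).elim⟩, fun a => (IsEmpty.false a).elim⟩
  | inr hβ => ?_
  let C : ℕ → Set α := fun n => Nat.rec (Set.range g)ᶜ (fun _ s => g '' (f '' s)) n
  let Cs : Set α := ⋃ n, C n
  have hstep : ∀ n, ∀ a ∈ C n, g (f a) ∈ C (n + 1) := fun n a ha => ⟨f a, ⟨a, ha, rfl⟩, rfl⟩
  have hinv : ∀ a ∉ Cs, g (Function.invFun g a) = a := by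
    intro a ha
    have h0 : a ∉ C 0 := fun h => ha (Set.mem_iUnion.2 ⟨0, h⟩)
    have : a ∈ Set.range g := by simpa [C] using h0
    exact Function.invFun_eq this
  refine ⟨fun a => if a ∈ Cs then f a else Function.invFun g a, ⟨?_, ?_⟩, ?_⟩
  · intro a a' hh
    by_cases h1 : a ∈ Cs <;> by_cases h2 : a' ∈ Cs <;> simp only [h1, h2, if_pos, if_neg, if_true, if_false] at hh
    · exact hf hh
    · -- a ∈ Cs, a' ∉ Cs : f a = invFun g a'
      exfalso
      obtain ⟨n, hn⟩ := Set.mem_iUnion.1 h1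
      have : g (f a) = a' := by rw [hh]; exact hinv a' h2
      exact h2 (Set.mem_iUnion.2 ⟨n + 1, this ▸ hstep n a hn⟩)
    · exfalso
      obtain ⟨n, hn⟩ := Set.mem_iUnion.1 h2
      have : g (f a') = a := by rw [← hh]; exact hinv a h1
      exact h1 (Set.mem_iUnion.2 ⟨n + 1, this ▸ hstep n a' hn⟩)
    · have : g (Function.invFun g a) = g (Function.invFun g a') := by rw [hh]
      rw [hinv a h1, hinv a' h2] at this; exact this
  · intro b
    by_cases hb : g b ∈ Cs
    · obtain ⟨n, hn⟩ := Set.mem_iUnion.1 hb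
      cases n with
      | zero => exact absurd (Set.mem_range_self b) hn
      | succ m =>
        obtain ⟨b', ⟨a, ha, rfl⟩, hgb⟩ := hn
        have hba : b = f a := hg hgb.symm
        have haCs : a ∈ Cs := Set.mem_iUnion.2 ⟨m, ha⟩
        exact ⟨a, by simp [haCs, hba]⟩
    · have hgbr : g b ∉ Cs := hb
      refine ⟨g b, ?_⟩
      simp only [hgbr, if_neg, if_false]
      exact hg (hinv (g b) hgbr)
  · intro a
    by_cases h1 : a ∈ Cs
    · left; simp [h1]
    · right; simp only [h1, if_false, if_neg]; exact hinv a h1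

theorem hall_side_inj {X G : Type*} [Group G] [MulAction G X]
    (F : Finset G) (A B : Set X)
    (hall : ∀ S : Finset X, ↑S ⊆ A → S.card ≤ (((F : Set G) • (S : Set X)) ∩ B).ncard) :
    ∃ f : A → B, Function.Injective f ∧ ∀ a : A, ∃ u ∈ F, ((f a : X)) = u • (a : X) := by
  classical
  let t : A → Finset X := fun a => (F.image fun u => u • (a : X)).filter (· ∈ B)
  have key : ∀ s : Finset A, s.card ≤ (s.biUnion t).card := by
    intro s
    have hsub : (↑(s.image Subtype.val) : Set X) ⊆ A := by
      intro x hx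
      simp only [Finset.coe_image, Set.mem_image, Finset.mem_coe] at hx
      obtain ⟨a, _, rfl⟩ := hx
      exact a.2
    have h1 := hall (s.image Subtype.val) hsub
    rw [Finset.card_image_of_injective _ Subtype.val_injective] at h1
    have heq : ((F : Set G) • (↑(s.image Subtype.val) : Set X)) ∩ B = ↑(s.biUnion t) := by
      ext x
      simp only [Set.mem_inter_iff, Set.mem_smul, Finset.coe_image, Set.mem_image,
        Finset.mem_coe, Finset.coe_biUnion, Set.mem_iUnion, Finset.mem_filter,
        Finset.mem_image, t, Finset.mem_coe, decide_eq_true_eq]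
      constructor
      · rintro ⟨⟨u, hu, y, ⟨a, ha, rfl⟩, rfl⟩, hxB⟩
        exact ⟨a, ha, ⟨u, hu, rfl⟩, hxB⟩
      · rintro ⟨a, ha, ⟨u, hu, rfl⟩, hxB⟩
        exact ⟨⟨u, hu, ↑a, ⟨a, ha, rfl⟩, rfl⟩, hxB⟩
    rw [heq, Set.ncard_coe_finset] at h1
    exact h1
  obtain ⟨f, hfinj, hft⟩ := (Finset.all_card_le_biUnion_card_iff_exists_injective t).1 key
  have hmem : ∀ a : A, f a ∈ B ∧ ∃ u ∈ F, f a = u • (a : X) := by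
    intro a
    have := hft a
    simp only [t, Finset.mem_filter, Finset.mem_image, decide_eq_true_eq] at this
    exact ⟨this.2, by obtain ⟨⟨u, hu, h⟩, _⟩ := this; exact ⟨u, hu, h.symm⟩⟩
  refine ⟨fun a => ⟨f a, (hmem a).1⟩, ?_, ?_⟩
  · intro a a' h
    exact hfinj (congrArg Subtype.val h)
  · exact fun a => (hmem a).2

section Aux

variable {X G : Type*} [Group G] [MulAction G X]

/-- There is a bijection from `A` to `B` moving each point by an element of `F`. -/
def GoodBij (F : Finset G) (A B : Set X) : Prop :=
  ∃ h : A → B, Function.Bijective h ∧ ∀ a : A, ∃ u ∈ F, ((h a : X)) = u • (a : X)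

theorem goodBij_of_hall' (F : Finset G) (A B : Set X)
    (h1 : ∀ S : Finset X, ↑S ⊆ A → S.card ≤ (((F : Set G) • (S : Set X)) ∩ B).ncard)
    (h2 : ∀ T : Finset X, ↑T ⊆ B → T.card ≤ (((F : Set G)⁻¹ • (T : Set X)) ∩ A).ncard) :
    GoodBij F A B := by
  classical
  obtain ⟨f, hf, hfF⟩ := hall_side_inj F A B h1
  obtain ⟨g, hg, hgF⟩ := hall_side_inj F⁻¹ B A (by
    intro T hT
    have := h2 T hT
    rwa [← Finset.coe_inv] at this)
  obtain ⟨h, hbij, hor⟩ := csb_or f g hf hg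
  refine ⟨h, hbij, fun a => ?_⟩
  rcases hor a with heq | heq
  · obtain ⟨u, hu, hu'⟩ := hfF a
    exact ⟨u, hu, heq ▸ hu'⟩
  · obtain ⟨u, hu, hu'⟩ := hgF (h a)
    have hval : (a : X) = u • (h a : X) := by
      rw [← hu']; exact (congrArg Subtype.val heq).symm
    refine ⟨u⁻¹, ?_, ?_⟩
    · simpa using hu
    · rw [hval, inv_smul_smul]

theorem hall_of_goodBij (F : Finset G) (A B : Set X) (hgb : GoodBij F A B) :
    HallCondition F A B := by
  classical
  obtain ⟨h, hbij, hF⟩ := hgb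
  let e := Equiv.ofBijective h hbij
  constructor
  · intro S hS
    have hfin : (((F : Set G) • (S : Set X)) ∩ B).Finite :=
      (F.finite_toSet.smul S.finite_toSet).inter_of_left _
    rw [← Set.ncard_coe_finset S]
    refine Set.ncard_le_ncard_of_injOn
      (fun x => if hx : x ∈ A then (h ⟨x, hx⟩ : X) else x) ?_ ?_ hfin
    · intro x hx
      have hxA : x ∈ A := hS hx
      simp only [dif_pos hxA]
      obtain ⟨u, hu, hu'⟩ := hF ⟨x, hxA⟩
      exact ⟨⟨u, hu, x, hx, hu'.symm⟩, (h ⟨x, hxA⟩).2⟩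
    · intro x hx y hy hxy
      have hxA : x ∈ A := hS hx
      have hyA : y ∈ A := hS hy
      simp only [dif_pos hxA, dif_pos hyA] at hxy
      have := hbij.1 (Subtype.val_injective hxy)
      exact congrArg Subtype.val this
  · intro T hT
    have hfin : (((F : Set G)⁻¹ • (T : Set X)) ∩ A).Finite :=
      ((F.finite_toSet.inv).smul T.finite_toSet).inter_of_left _
    rw [← Set.ncard_coe_finset T]
    refine Set.ncard_le_ncard_of_injOn
      (fun x => if hx : x ∈ B then (e.symm ⟨x, hx⟩ : X) else x) ?_ ?_ hfin
    · intro x hx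
      have hxB : x ∈ B := hT hx
      simp only [dif_pos hxB]
      obtain ⟨u, hu, hu'⟩ := hF (e.symm ⟨x, hxB⟩)
      have hval : (h (e.symm ⟨x, hxB⟩) : X) = x := by
        have : e (e.symm ⟨x, hxB⟩) = ⟨x, hxB⟩ := e.apply_symm_apply _
        exact congrArg Subtype.val this
      rw [hval] at hu'
      refine ⟨⟨u⁻¹, Set.inv_mem_inv.2 hu, x, hx, ?_⟩, (e.symm ⟨x, hxB⟩).2⟩
      show u⁻¹ • x = ((e.symm ⟨x, hxB⟩ : A) : X)
      rw [inv_smul_eq_iff]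
      exact hu'
    · intro x hx y hy hxy
      have hxB : x ∈ B := hT hx
      have hyB : y ∈ B := hT hy
      simp only [dif_pos hxB, dif_pos hyB] at hxy
      have := e.symm.injective (Subtype.val_injective hxy)
      exact congrArg Subtype.val this

theorem goodBij_of_equi (F : Finset G) (A B : Set X) (h : EquidecomposableUsing F A B) :
    GoodBij F A B := by
  classical
  obtain ⟨n, P, g, hgF, ⟨hPA, hPdisj⟩, ⟨hQB, hQdisj⟩⟩ := h
  have idx : ∀ a : A, ∃ i, (a : X) ∈ P i := by
    intro a
    have : (a : X) ∈ ⋃ i, P i := hPA ▸ a.2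
    exact Set.mem_iUnion.1 this
  choose ι hι using idx
  have hmem : ∀ a : A, g (ι a) • (a : X) ∈ B := by
    intro a
    have : g (ι a) • (a : X) ∈ g (ι a) • P (ι a) := Set.smul_mem_smul_set (hι a)
    exact hQB ▸ Set.mem_iUnion.2 ⟨ι a, this⟩
  refine ⟨fun a => ⟨g (ι a) • (a : X), hmem a⟩, ⟨?_, ?_⟩, fun a => ⟨g (ι a), hgF _, rfl⟩⟩
  · intro a a' hh
    have hv : g (ι a) • (a : X) = g (ι a') • (a' : X) := congrArg Subtype.val hh
    have hieq : ι a = ι a' := by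
      by_contra hne
      have hmem2 : g (ι a) • (a : X) ∈ g (ι a') • P (ι a') := by
        rw [hv]; exact ⟨(a' : X), hι a', rfl⟩
      exact Set.disjoint_left.1 (hQdisj hne) ⟨(a : X), hι a, rfl⟩ hmem2
    rw [hieq] at hv
    exact Subtype.val_injective (smul_left_cancel _ hv)
  · intro b
    have hb : (b : X) ∈ ⋃ i, g i • P i := hQB ▸ b.2
    obtain ⟨i, ⟨x, hxP, hxb⟩⟩ := Set.mem_iUnion.1 hb
    have hxA : x ∈ A := hPA ▸ Set.mem_iUnion.2 ⟨i, hxP⟩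
    refine ⟨⟨x, hxA⟩, ?_⟩
    have hieq : ι ⟨x, hxA⟩ = i := by
      by_contra hne
      exact Set.disjoint_left.1 (hPdisj hne) (hι ⟨x, hxA⟩) hxP
    apply Subtype.val_injective
    show g (ι ⟨x, hxA⟩) • x = (b : X)
    rw [hieq]; exact hxb

theorem equi_of_goodBij (F : Finset G) (A B : Set X) (hgb : GoodBij F A B) :
    EquidecomposableUsing F A B := by
  classical
  obtain ⟨h, hbij, hF⟩ := hgb
  choose u hu h_eq using hF
  let e := F.equivFin
  let P : Fin F.card → Set X := fun i => {x : X | ∃ hx : x ∈ A, e ⟨u ⟨x, hx⟩, hu _⟩ = i}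
  have hPmem : ∀ (a : A) (i : Fin F.card), (a : X) ∈ P i ↔ e ⟨u a, hu a⟩ = i := by
    intro a i
    constructor
    · rintro ⟨hx, hex⟩
      rwa [show (⟨(a : X), hx⟩ : A) = a from Subtype.ext rfl] at hex
    · intro hex
      exact ⟨a.2, by rwa [show (⟨(a : X), a.2⟩ : A) = a from Subtype.ext rfl]⟩
  have hQmem : ∀ (y : X) (i : Fin F.card),
      y ∈ ((e.symm i : G) • P i) ↔ ∃ a : A, e ⟨u a, hu a⟩ = i ∧ y = (h a : X) := by
    intro y i
    constructor
    · rintro ⟨x, hxP, rfl⟩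
      obtain ⟨hx, hex⟩ := hxP
      refine ⟨⟨x, hx⟩, hex, ?_⟩
      have : ((e.symm i : F) : G) = u ⟨x, hx⟩ := by
        rw [← hex, Equiv.symm_apply_apply]
      rw [this, h_eq]
    · rintro ⟨a, hex, rfl⟩
      refine ⟨(a : X), (hPmem a i).2 hex, ?_⟩
      have : ((e.symm i : F) : G) = u a := by
        rw [← hex, Equiv.symm_apply_apply]
      rw [this, h_eq]
  refine ⟨F.card, P, fun i => (e.symm i : G), fun i => (e.symm i).2, ⟨?_, ?_⟩, ⟨?_, ?_⟩⟩
  · ext x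
    simp only [Set.mem_iUnion]
    constructor
    · rintro ⟨i, hx, _⟩; exact hx
    · intro hx; exact ⟨e ⟨u ⟨x, hx⟩, hu _⟩, hx, rfl⟩
  · intro i j hij
    rw [Function.onFun, Set.disjoint_left]
    rintro x ⟨hx, hex⟩ ⟨hx', hex'⟩
    rw [show (⟨x, hx'⟩ : A) = ⟨x, hx⟩ from Subtype.ext rfl] at hex'
    exact hij (hex ▸ hex')
  · ext y
    simp only [Set.mem_iUnion]
    constructor
    · rintro ⟨i, hy⟩
      obtain ⟨a, _, rfl⟩ := (hQmem y i).1 hy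
      exact (h a).2
    · intro hy
      obtain ⟨a, ha⟩ := hbij.2 ⟨y, hy⟩
      exact ⟨e ⟨u a, hu a⟩, (hQmem y _).2 ⟨a, rfl, by rw [ha]⟩⟩
  · intro i j hij
    rw [Function.onFun, Set.disjoint_left]
    intro y hyi hyj
    obtain ⟨a, hai, hay⟩ := (hQmem y i).1 hyi
    obtain ⟨a', haj, hay'⟩ := (hQmem y j).1 hyj
    have : a = a' := hbij.1 (Subtype.val_injective (hay ▸ hay'))
    exact hij (hai ▸ this ▸ haj)

end Aux

/-- `A` and `B` are `G`-equidecomposable iff they satisfy Hall's condition with respect to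
some finite set `F ⊆ G`; moreover, for a given finite `F ⊆ G`, the sets `A` and `B` are
equidecomposable using only actions of elements of `F` iff Hall's condition holds with `F`. -/
theorem equidecomposable_iff_hall {X G : Type*} [Group G] [MulAction G X] (A B : Set X) :
    (Equidecomposable (G := G) A B ↔ ∃ F : Finset G, HallCondition F A B) ∧
      (∀ F : Finset G, EquidecomposableUsing F A B ↔ HallCondition F A B) := by
  have main : ∀ F : Finset G, EquidecomposableUsing F A B ↔ HallCondition F A B := by
    intro F
    constructor
    · intro h
      exact hall_of_goodBij F A B (goodBij_of_equi F A B h)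
    · intro h
      exact equi_of_goodBij F A B (goodBij_of_hall' F A B h.1 h.2)
  exact ⟨exists_congr main, main⟩
end

section
/- Let (X, μ) be a measure space endowed with a measure-preserving action of a countable group G. Then two measurable sets A, B ⊆ X are G-equidecomposable up to measure zero (with possibly non-measurable pieces) if and only if A and B satisfy Hall's condition almost everywhere with respect to G. -/
open Pointwise MeasureTheory

/-- `A` and `B` are `G`-equidecomposable up to measure zero (with possibly
non-measurable pieces). -/
def EquidecompUpToNull {X G : Type*} [Group G] [MulAction G X] [MeasurableSpace X]
    (μ : Measure X) (A B : Set X) : Prop :=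
  ∃ (n : ℕ) (P : Fin n → Set X) (g : Fin n → G) (X' : Set X),
    μ X'ᶜ = 0 ∧
    IsPartitionOf (fun i => P i ∩ X') (A ∩ X') ∧
    IsPartitionOf (fun i => (g i • P i) ∩ X') (B ∩ X')

/-- `A` and `B` satisfy Hall's condition a.e. with respect to `G`: there are a finite
`F ⊆ G` and a full measure set `X'` such that for every `x ∈ X'`, Hall's condition holds
for `A ∩ (G · x)` and `B ∩ (G · x)` with the set `F`. -/
def HallConditionAE {X G : Type*} [Group G] [MulAction G X] [MeasurableSpace X]
    (μ : Measure X) (A B : Set X) : Prop :=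
  ∃ (F : Finset G) (X' : Set X), μ X'ᶜ = 0 ∧ ∀ x ∈ X',
    (∀ S : Finset X, ↑S ⊆ A ∩ MulAction.orbit G x →
      S.card ≤ (((F : Set G) • (S : Set X)) ∩ B).ncard) ∧
    (∀ T : Finset X, ↑T ⊆ B ∩ MulAction.orbit G x →
      T.card ≤ (((F : Set G)⁻¹ • (T : Set X)) ∩ A).ncard)

/-!
Both conditions are equivalent to a third one: after discarding a `G`-invariant null set `Cᶜ`,
there is a bijection `A ∩ C ≃ B ∩ C` moving every point by an element of a fixed finite
`F ⊆ G`. Such a bijection is a finite equidecomposition (a piece is where it acts by a given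
element of `F`), and injectivity of it and of its inverse gives Hall's condition for `F`.
Conversely, Hall's condition on each orbit is Hall's condition globally, because
`F`-neighbourhoods never leave an orbit; Hall's marriage theorem for infinite families of finite
sets then gives injections `A ∩ C → B ∩ C` and `B ∩ C → A ∩ C` moving points by `F` and `F⁻¹`,
and the Schröder–Bernstein construction combines them into a bijection of the required kind.
Invariance of `C` comes from intersecting the countably many translates of a conull set, all
conull since `G` preserves `μ`.
-/

open Finset Function

namespace IsPartitionOf

variable {X : Type*} {n : ℕ} {P : Fin n → Set X} {A : Set X}

theorem exists_mem (h : IsPartitionOf P A) {x : X} (hx : x ∈ A) : ∃ i, x ∈ P i :=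
  Set.mem_iUnion.1 (h.1 ▸ hx)

theorem subset (h : IsPartitionOf P A) (i : Fin n) : P i ⊆ A :=
  h.1 ▸ Set.subset_iUnion P i

theorem eq_of_mem (h : IsPartitionOf P A) {x : X} {i j : Fin n} (hi : x ∈ P i)
    (hj : x ∈ P j) : i = j := by
  by_contra hij
  exact Set.disjoint_left.1 (h.2 hij) hi hj

end IsPartitionOf

theorem Finset.card_le_card_biUnion_of_forall_fiber {ι α κ : Type*} [DecidableEq α]
    [DecidableEq κ] {t : ι → Finset α} {p : ι → κ} {q : α → κ}
    (hpq : ∀ i, ∀ a ∈ t i, q a = p i) (s : Finset ι)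
    (h : ∀ k, #{i ∈ s | p i = k} ≤ #({i ∈ s | p i = k}.biUnion t)) :
    #s ≤ #(s.biUnion t) := by
  have hmaps : Set.MapsTo q ↑(s.biUnion t) ↑(s.image p) := by
    intro a ha
    obtain ⟨i, hi, hai⟩ := mem_biUnion.1 ha
    exact mem_image.2 ⟨i, hi, (hpq i a hai).symm⟩
  have hfiber : ∀ k, {a ∈ s.biUnion t | q a = k} = {i ∈ s | p i = k}.biUnion t := by
    intro k
    ext a
    simp only [mem_filter, mem_biUnion]
    constructor
    · rintro ⟨⟨i, hi, hai⟩, rfl⟩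
      exact ⟨i, ⟨hi, (hpq i a hai).symm⟩, hai⟩
    · rintro ⟨i, ⟨hi, rfl⟩, hai⟩
      exact ⟨⟨i, hi, hai⟩, hpq i a hai⟩
  calc #s = ∑ k ∈ s.image p, #{i ∈ s | p i = k} := card_eq_sum_card_image p s
    _ ≤ ∑ k ∈ s.image p, #({i ∈ s | p i = k}.biUnion t) := sum_le_sum fun k _ => h k
    _ = #(s.biUnion t) := by
      simp only [← hfiber]
      exact (card_eq_sum_card_fiberwise hmaps).symm

section

variable {X G : Type*} [Group G] [MulAction G X]

theorem exists_smul_invariant_subset_of_measure_compl_eq_zero [Countable G]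
    [MeasurableSpace X] {μ : Measure X}
    (hmp : ∀ g : G, MeasurePreserving (fun x : X => g • x) μ μ) {X' : Set X}
    (hX' : μ X'ᶜ = 0) : ∃ C ⊆ X', μ Cᶜ = 0 ∧ ∀ g : G, ∀ x ∈ C, g • x ∈ C := by
  refine ⟨{x | ∀ g : G, g • x ∈ X'}, fun x hx => by simpa using hx 1, ?_, ?_⟩
  · exact ae_all_iff.2 fun g => (hmp g).quasiMeasurePreserving.ae hX'
  · intro g x hx h
    rw [smul_smul]
    exact hx _

theorem card_le_ncard_smul_inter_of_injective {F : Set G} (hF : F.Finite) {A B : Set X}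
    (f : A → B) (hf : Injective f) (hfF : ∀ a, ∃ γ ∈ F, (f a : X) = γ • (a : X))
    {S : Finset X} (hS : ↑S ⊆ A) : #S ≤ ((F • (S : Set X)) ∩ B).ncard := by
  have hfin : ((F • (S : Set X)) ∩ B).Finite := (hF.smul S.finite_toSet).inter_of_left B
  calc #S = (Subtype.val ⁻¹' (S : Set X) : Set A).ncard := by
        rw [Set.ncard_preimage_of_injective_subset_range Subtype.val_injective
          (by simpa using hS), Set.ncard_coe_finset]
    _ ≤ ((F • (S : Set X)) ∩ B).ncard := by
      refine Set.ncard_le_ncard_of_injOn (fun a => (f a : X)) ?_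
        (Subtype.val_injective.comp hf).injOn hfin
      intro a ha
      obtain ⟨γ, hγ, hfa⟩ := hfF a
      exact ⟨hfa ▸ Set.smul_mem_smul hγ ha, (f a).2⟩

theorem exists_injective_smul_of_forall_orbit {F : Set G} (hF : F.Finite) {A B : Set X}
    (hHall : ∀ x ∈ A, ∀ S : Finset X, ↑S ⊆ A ∩ MulAction.orbit G x →
      #S ≤ ((F • (S : Set X)) ∩ B).ncard) :
    ∃ f : A → X, Injective f ∧ ∀ a, f a ∈ B ∧ ∃ γ ∈ F, f a = γ • (a : X) := by
  classical
  lift F to Finset G using hF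
  let t : A → Finset X := fun a => {y ∈ F.image (· • (a : X)) | y ∈ B}
  have hcard : ∀ s : Finset A, #(s.biUnion t) =
      (((F : Set G) • ((s.map (Embedding.subtype _) : Finset X) : Set X)) ∩ B).ncard := by
    intro s
    rw [← coe_smul, ← Set.ncard_coe_finset]
    congr 1
    ext y
    simp only [t, mem_biUnion, mem_filter, mem_image, Set.mem_inter_iff, mem_coe, mem_smul,
      mem_map, Embedding.coe_subtype]
    aesop
  let orb : X → MulAction.orbitRel.Quotient G X := Quotient.mk _
  have hclass : ∀ a, ∀ y ∈ t a, orb y = orb a := by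
    intro a y hy
    obtain ⟨γ, -, rfl⟩ := mem_image.1 (mem_filter.1 hy).1
    exact Quotient.sound (MulAction.mem_orbit _ γ)
  obtain ⟨f, hf, hft⟩ := (all_card_le_biUnion_card_iff_exists_injective t).1 fun s =>
    card_le_card_biUnion_of_forall_fiber hclass s fun k => by
      obtain he | ⟨a₀, ha₀⟩ := (s.filter fun a : A => orb a = k).eq_empty_or_nonempty
      · simp [he]
      rw [hcard, ← card_map (Embedding.subtype _)]
      refine hHall a₀ a₀.2 _ fun x hx => ?_
      simp only [coe_map, Embedding.coe_subtype, Set.mem_image, mem_coe, mem_filter] at hx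
      obtain ⟨a, ⟨-, hak⟩, rfl⟩ := hx
      exact ⟨a.2, Quotient.exact (hak.trans (mem_filter.1 ha₀).2.symm)⟩
  refine ⟨f, hf, fun a => ?_⟩
  obtain ⟨hfa, hfB⟩ := mem_filter.1 (hft a)
  obtain ⟨γ, hγ, hfa⟩ := mem_image.1 hfa
  exact ⟨hfB, γ, hγ, hfa.symm⟩

theorem exists_equiv_smul_of_forall_orbit {F : Finset G} {A B C : Set X}
    (hC : ∀ g : G, ∀ x ∈ C, g • x ∈ C)
    (hA : ∀ x ∈ C, ∀ S : Finset X, ↑S ⊆ A ∩ MulAction.orbit G x →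
      #S ≤ (((F : Set G) • (S : Set X)) ∩ B).ncard)
    (hB : ∀ x ∈ C, ∀ T : Finset X, ↑T ⊆ B ∩ MulAction.orbit G x →
      #T ≤ (((F : Set G)⁻¹ • (T : Set X)) ∩ A).ncard) :
    ∃ e : ↥(A ∩ C) ≃ ↥(B ∩ C), ∀ a, ∃ γ ∈ (F : Set G), (e a : X) = γ • (a : X) := by
  obtain ⟨f, hf, hfF⟩ := exists_injective_smul_of_forall_orbit F.finite_toSet fun x hx S hS =>
    hA x hx.2 S (hS.trans (Set.inter_subset_inter_left _ Set.inter_subset_left))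
  obtain ⟨g, hg, hgF⟩ := exists_injective_smul_of_forall_orbit F.finite_toSet.inv fun x hx T hT =>
    hB x hx.2 T (hT.trans (Set.inter_subset_inter_left _ Set.inter_subset_left))
  let f' : ↥(A ∩ C) → ↥(B ∩ C) := fun a =>
    ⟨f a, (hfF a).1, by obtain ⟨γ, -, h⟩ := (hfF a).2; exact h ▸ hC γ a a.2.2⟩
  let g' : ↥(B ∩ C) → ↥(A ∩ C) := fun b =>
    ⟨g b, (hgF b).1, by obtain ⟨γ, -, h⟩ := (hgF b).2; exact h ▸ hC γ b b.2.2⟩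
  obtain ⟨e, he, heF⟩ := Embedding.schroeder_bernstein_of_rel (f := f') (g := g')
    (fun a a' h => hf (congrArg Subtype.val h)) (fun b b' h => hg (congrArg Subtype.val h))
    (fun a b => ∃ γ ∈ (F : Set G), (b : X) = γ • (a : X)) (fun a => (hfF a).2) fun b => by
      obtain ⟨γ, hγ, h⟩ := (hgF b).2
      exact ⟨γ⁻¹, hγ, by simp [g', h]⟩
  exact ⟨Equiv.ofBijective e he, heF⟩

theorem isPartitionOf_image_preimage_singleton {ι : Type*} {n : ℕ} (v : ι → X)
    (hv : Injective v) (c : ι → Fin n) :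
    IsPartitionOf (fun i => v '' (c ⁻¹' {i})) (Set.range v) := by
  refine ⟨?_, fun i j hij => ?_⟩
  · rw [← Set.image_iUnion, ← Set.preimage_iUnion, Set.iUnion_of_singleton, Set.preimage_univ,
      Set.image_univ]
  · exact ((Set.disjoint_singleton.2 hij).preimage c).image hv.injOn (Set.subset_univ _)
      (Set.subset_univ _)

theorem exists_isPartitionOf_of_equiv_smul {F : Set G} (hF : F.Finite) {A B : Set X}
    (e : A ≃ B) (he : ∀ a, ∃ γ ∈ F, (e a : X) = γ • (a : X)) :
    ∃ (n : ℕ) (P : Fin n → Set X) (g : Fin n → G),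
      IsPartitionOf P A ∧ IsPartitionOf (fun i => g i • P i) B := by
  lift F to Finset G using hF
  let g : Fin #F → G := fun i => F.equivFin.symm i
  have hidx : ∀ a, ∃ i, (e a : X) = g i • (a : X) := fun a => by
    obtain ⟨γ, hγ, h⟩ := he a
    exact ⟨F.equivFin ⟨γ, hγ⟩, by simp [g, h]⟩
  choose c hc using hidx
  refine ⟨#F, fun i => Subtype.val '' (c ⁻¹' {i}), g, ?_, ?_⟩
  · simpa using isPartitionOf_image_preimage_singleton _ Subtype.val_injective c
  · have hpieces : ∀ i,
        g i • Subtype.val '' (c ⁻¹' {i}) = (Subtype.val ∘ e) '' (c ⁻¹' {i}) := by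
      intro i
      rw [← Set.image_smul, Set.image_image]
      refine Set.image_congr fun a (ha : c a = i) => ?_
      rw [comp_apply, hc a, ha]
    simp only [hpieces]
    convert isPartitionOf_image_preimage_singleton _ (Subtype.val_injective.comp e.injective) c
    simp [Set.range_comp]

theorem exists_equiv_smul_of_isPartitionOf {n : ℕ} {P : Fin n → Set X} {g : Fin n → G}
    {A B X' C : Set X} (hA : IsPartitionOf (fun i => P i ∩ X') (A ∩ X'))
    (hB : IsPartitionOf (fun i => (g i • P i) ∩ X') (B ∩ X')) (hCX' : C ⊆ X')
    (hC : ∀ γ : G, ∀ x ∈ C, γ • x ∈ C) :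
    ∃ e : ↥(A ∩ C) ≃ ↥(B ∩ C), ∀ a, ∃ γ ∈ Set.range g, (e a : X) = γ • (a : X) := by
  choose c hc using fun a : ↥(A ∩ C) => hA.exists_mem ⟨a.2.1, hCX' a.2.2⟩
  have hpiece : ∀ a : ↥(A ∩ C), g (c a) • (a : X) ∈ (g (c a) • P (c a)) ∩ X' := fun a =>
    ⟨Set.smul_mem_smul_set (hc a).1, hCX' (hC _ _ a.2.2)⟩
  let φ : ↥(A ∩ C) → ↥(B ∩ C) := fun a =>
    ⟨g (c a) • (a : X), (hB.subset _ (hpiece a)).1, hC _ _ a.2.2⟩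
  have hinj : Injective φ := by
    intro a a' h
    have h' : g (c a) • (a : X) = g (c a') • (a' : X) := congrArg Subtype.val h
    have hcc : c a = c a' := hB.eq_of_mem (hpiece a) (h' ▸ hpiece a')
    rw [hcc] at h'
    exact Subtype.ext (smul_left_cancel _ h')
  have hsurj : Surjective φ := by
    rintro ⟨b, hbB, hbC⟩
    obtain ⟨j, hbj, -⟩ := hB.exists_mem ⟨hbB, hCX' hbC⟩
    have haj : (g j)⁻¹ • b ∈ P j ∩ X' :=
      ⟨Set.mem_smul_set_iff_inv_smul_mem.1 hbj, hCX' (hC _ _ hbC)⟩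
    let a : ↥(A ∩ C) := ⟨(g j)⁻¹ • b, (hA.subset _ haj).1, hC _ _ hbC⟩
    refine ⟨a, Subtype.ext ?_⟩
    change g (c a) • (g j)⁻¹ • b = b
    rw [hA.eq_of_mem (hc a) haj, smul_inv_smul]
  exact ⟨Equiv.ofBijective φ ⟨hinj, hsurj⟩, fun a => ⟨g (c a), Set.mem_range_self _, rfl⟩⟩

variable [MeasurableSpace X] {μ : Measure X}

theorem hallConditionAE_of_equiv_smul {F : Set G} (hF : F.Finite) {A B C : Set X}
    (hC : μ Cᶜ = 0) (hCinv : ∀ γ : G, ∀ x ∈ C, γ • x ∈ C) (e : ↥(A ∩ C) ≃ ↥(B ∩ C))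
    (he : ∀ a, ∃ γ ∈ F, (e a : X) = γ • (a : X)) : HallConditionAE (G := G) μ A B := by
  lift F to Finset G using hF
  have horbit : ∀ x ∈ C, MulAction.orbit G x ⊆ C := by
    rintro x hx _ ⟨γ, rfl⟩
    exact hCinv γ x hx
  have hsymm : ∀ b, ∃ γ ∈ (F : Set G)⁻¹, (e.symm b : X) = γ • (b : X) := fun b => by
    obtain ⟨γ, hγ, h⟩ := he (e.symm b)
    rw [e.apply_symm_apply] at h
    exact ⟨γ⁻¹, by simpa using hγ, (inv_smul_eq_iff.2 h).symm⟩
  refine ⟨F, C, hC, fun x hx => ⟨fun S hS => ?_, fun T hT => ?_⟩⟩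
  · exact card_le_ncard_smul_inter_of_injective F.finite_toSet
      (Set.inclusion Set.inter_subset_left ∘ e) ((Set.inclusion_injective _).comp e.injective) he
      (hS.trans (Set.inter_subset_inter_right _ (horbit x hx)))
  · exact card_le_ncard_smul_inter_of_injective F.finite_toSet.inv
      (Set.inclusion Set.inter_subset_left ∘ e.symm)
      ((Set.inclusion_injective _).comp e.symm.injective) hsymm
      (hT.trans (Set.inter_subset_inter_right _ (horbit x hx)))

theorem equidecompUpToNull_of_equiv_smul {F : Set G} (hF : F.Finite) {A B C : Set X}
    (hC : μ Cᶜ = 0) (e : ↥(A ∩ C) ≃ ↥(B ∩ C)) (he : ∀ a, ∃ γ ∈ F, (e a : X) = γ • (a : X)) :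
    EquidecompUpToNull (G := G) μ A B := by
  obtain ⟨n, P, g, hP, hgP⟩ := exists_isPartitionOf_of_equiv_smul hF e he
  have hPC : ∀ i, P i ∩ C = P i := fun i =>
    Set.inter_eq_left.2 fun x hx => (hP.subset i hx).2
  have hgPC : ∀ i, (g i • P i) ∩ C = g i • P i := fun i =>
    Set.inter_eq_left.2 fun x hx => (hgP.subset i hx).2
  exact ⟨n, P, g, C, hC, by simpa only [hPC] using hP, by simpa only [hgPC] using hgP⟩

end

theorem equidecompUpToNull_iff_hallAE_general {X G : Type*} [Group G] [Countable G] [MulAction G X]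
    [MeasurableSpace X] (μ : Measure X)
    (hmp : ∀ g : G, MeasurePreserving (fun x : X => g • x) μ μ)
    (A B : Set X) :
    EquidecompUpToNull (G := G) μ A B ↔ HallConditionAE (G := G) μ A B := by
  constructor
  · rintro ⟨n, P, g, X', hX', hA, hB⟩
    obtain ⟨C, hCX', hC, hCinv⟩ := exists_smul_invariant_subset_of_measure_compl_eq_zero hmp hX'
    obtain ⟨e, he⟩ := exists_equiv_smul_of_isPartitionOf hA hB hCX' hCinv
    exact hallConditionAE_of_equiv_smul (Set.finite_range g) hC hCinv e he
  · rintro ⟨F, X', hX', hHall⟩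
    obtain ⟨C, hCX', hC, hCinv⟩ := exists_smul_invariant_subset_of_measure_compl_eq_zero hmp hX'
    obtain ⟨e, he⟩ := exists_equiv_smul_of_forall_orbit hCinv
      (fun x hx => (hHall x (hCX' hx)).1) (fun x hx => (hHall x (hCX' hx)).2)
    exact equidecompUpToNull_of_equiv_smul F.finite_toSet hC e he

/-- For a measure space `(X, μ)` with a measure-preserving action of a countable group `G`,
two measurable sets `A, B ⊆ X` are `G`-equidecomposable up to measure zero iff they satisfy
Hall's condition a.e. with respect to `G`. -/
theorem equidecompUpToNull_iff_hallAE {X G : Type*} [Group G] [Countable G] [MulAction G X]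
    [MeasurableSpace X] (μ : Measure X)
    (hmp : ∀ g : G, MeasurePreserving (fun x : X => g • x) μ μ)
    (A B : Set X) (hA : MeasurableSet A) (hB : MeasurableSet B) :
    EquidecompUpToNull (G := G) μ A B ↔ HallConditionAE (G := G) μ A B :=
  equidecompUpToNull_iff_hallAE_general μ hmp A B
end

section
/- Let A, B ⊆ ℤ^r and let s be a positive integer. If A × ℤ^s and B × ℤ^s are bounded distance equivalent with constant K (as subsets of ℝ^{r+s}), then A and B are bounded distance equivalent with the same constant K. -/
/-!
For a finite `F ⊆ A`, the bijection `A × ℤ^s → B × ℤ^s` maps `F × [-N, N]^s` injectively into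
`N_K(F) × [-N - ⌈K⌉, N + ⌈K⌉]^s`, where `N_K(F)` is the (finite) set of points of `B` within
distance `K` of `F`. Comparing cardinalities and letting `N → ∞` gives Hall's condition
`|F| ≤ |N_K(F)|`, so Hall's theorem for infinite families yields an injection `A → B` moving
points by at most `K`. The same holds with `A` and `B` exchanged, and the relational
Schröder–Bernstein theorem merges the two injections into a bijection with the same bound.
-/

open Set Function Finset Filter Topology

/-- Two point sets in a metric space are bounded distance equivalent with constant `K`:
there is a bijection moving every point a distance at most `K`. -/
def BDEquivWith {E : Type*} [MetricSpace E] (Λ Λ' : Set E) (K : ℝ) : Prop :=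
  ∃ χ : Λ → Λ', Function.Bijective χ ∧ ∀ p : Λ, dist (χ p : E) (p : E) ≤ K

def BDInjWith {E : Type*} [MetricSpace E] (Λ Λ' : Set E) (K : ℝ) : Prop :=
  ∃ χ : Λ → Λ', Injective χ ∧ ∀ p : Λ, dist (χ p : E) (p : E) ≤ K

namespace BDEquivWith

variable {E : Type*} [MetricSpace E] {Λ Λ' : Set E} {K : ℝ}

theorem bdInjWith (h : BDEquivWith Λ Λ' K) : BDInjWith Λ Λ' K :=
  let ⟨χ, hχ, hd⟩ := h
  ⟨χ, hχ.injective, hd⟩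

theorem symm (h : BDEquivWith Λ Λ' K) : BDEquivWith Λ' Λ K := by
  obtain ⟨χ, hχ, hd⟩ := h
  let e := Equiv.ofBijective χ hχ
  refine ⟨e.symm, e.symm.bijective, fun q => ?_⟩
  have hq := hd (e.symm q)
  rw [Equiv.ofBijective_apply_symm_apply χ hχ] at hq
  rwa [dist_comm]

theorem of_bdInjWith (h : BDInjWith Λ Λ' K) (h' : BDInjWith Λ' Λ K) : BDEquivWith Λ Λ' K := by
  obtain ⟨f, hf, hfd⟩ := h
  obtain ⟨g, hg, hgd⟩ := h'
  exact Embedding.schroeder_bernstein_of_rel hf hg (fun p q => dist (q : E) p ≤ K) hfd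
    fun q => (dist_comm _ _).trans_le (hgd q)

end BDEquivWith

theorem Nat.le_of_forall_mul_pow_le {m n c d : ℕ}
    (h : ∀ N : ℕ, m * (2 * N + 1) ^ d ≤ n * (2 * (N + c) + 1) ^ d) : m ≤ n := by
  have hratio : Tendsto (fun N : ℕ => ((2 * N + 1 : ℕ) : ℝ) / ((2 * N + 1 : ℕ) + 2 * c))
      atTop (𝓝 1) :=
    (tendsto_natCast_div_add_atTop (2 * c : ℝ)).comp
      (tendsto_atTop_mono (fun N => by simp only [id]; omega) tendsto_id)
  have hlim : Tendsto
      (fun N : ℕ => (m : ℝ) * (((2 * N + 1 : ℕ) : ℝ) / ((2 * N + 1 : ℕ) + 2 * c)) ^ d)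
      atTop (𝓝 m) := by
    simpa using (hratio.pow d).const_mul (m : ℝ)
  refine Nat.cast_le.1 (le_of_tendsto' hlim fun N => ?_)
  rw [div_pow, ← mul_div_assoc, div_le_iff₀ (by positivity)]
  exact_mod_cast (h N).trans_eq (by ring)

noncomputable def intBox (s N : ℕ) : Finset (Fin s → ℤ) :=
  Fintype.piFinset fun _ => Icc (-(N : ℤ)) N

theorem card_intBox (s N : ℕ) : #(intBox s N) = (2 * N + 1) ^ s := by
  simp only [intBox, Fintype.card_piFinset, Int.card_Icc, prod_const, card_univ, Fintype.card_fin]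
  congr 1
  omega

section IntBox

variable {s N : ℕ}

theorem mem_intBox {x : Fin s → ℤ} : x ∈ intBox s N ↔ ∀ i, |x i| ≤ N := by
  simp [intBox, abs_le]

theorem mem_intBox_add_ceil {x y : Fin s → ℤ} {c : ℝ} (hy : y ∈ intBox s N)
    (hxy : dist x y ≤ c) : x ∈ intBox s (N + ⌈c⌉₊) := by
  rw [mem_intBox] at hy ⊢
  intro i
  have hdist : ((|x i - y i| : ℤ) : ℝ) ≤ ⌈c⌉₊ := by
    rw [Int.cast_abs, Int.cast_sub, ← Int.dist_eq]
    exact (dist_le_pi_dist x y i).trans (hxy.trans (Nat.le_ceil c))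
  have hdist' : |x i - y i| ≤ (⌈c⌉₊ : ℤ) := by exact_mod_cast hdist
  push_cast
  linarith [abs_sub_abs_le_abs_sub (x i) (y i), hy i]

theorem card_le_card_of_injective_of_dist_snd_le {α β : Type*} {F : Finset α} {G : Finset β}
    {Φ : α × (Fin s → ℤ) → β × (Fin s → ℤ)} (hΦ : Injective Φ)
    (hFG : ∀ p, p.1 ∈ F → (Φ p).1 ∈ G) {c : ℝ} (hc : ∀ p, dist (Φ p).2 p.2 ≤ c) :
    #F ≤ #G := by
  refine Nat.le_of_forall_mul_pow_le (c := ⌈c⌉₊) (d := s) fun N => ?_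
  rw [← card_intBox s N, ← card_intBox s (N + ⌈c⌉₊), ← card_product, ← card_product]
  refine card_le_card_of_injOn Φ (fun p hp => ?_) hΦ.injOn
  rw [mem_coe, mem_product] at hp ⊢
  exact ⟨hFG p hp.1, mem_intBox_add_ceil hp.2 (hc p)⟩

end IntBox

def Equiv.Set.prodUniv {X : Type*} (A : Set X) (Y : Type*) : ↥(A ×ˢ (univ : Set Y)) ≃ A × Y :=
  (Equiv.Set.prod A univ).trans ((Equiv.refl A).prodCongr (Equiv.Set.univ Y))

theorem BDInjWith.of_prod_univ {X : Type*} [MetricSpace X] [ProperSpace X] [DiscreteTopology X]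
    {A B : Set X} {K : ℝ} {s : ℕ}
    (h : BDInjWith (A ×ˢ (univ : Set (Fin s → ℤ))) (B ×ˢ (univ : Set (Fin s → ℤ))) K) :
    BDInjWith A B K := by
  classical
  obtain ⟨χ, hχ, hd⟩ := h
  let Φ : A × (Fin s → ℤ) → B × (Fin s → ℤ) :=
    Equiv.Set.prodUniv B _ ∘ χ ∘ (Equiv.Set.prodUniv A _).symm
  have hΦ : Injective Φ :=
    (Equiv.Set.prodUniv B _).injective.comp (hχ.comp (Equiv.Set.prodUniv A _).symm.injective)
  have hΦd : ∀ p, dist ((Φ p).1 : X) p.1 ≤ K ∧ dist (Φ p).2 p.2 ≤ K := fun p =>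
    max_le_iff.1 (Prod.dist_eq.symm.trans_le (hd ((Equiv.Set.prodUniv A _).symm p)))
  let near : A → Finset B := fun a =>
    ((isCompact_closedBall (a : X) K).finite_of_discrete.preimage
      Subtype.val_injective.injOn).toFinset
  have mem_near {a : A} {b : B} : b ∈ near a ↔ dist (b : X) a ≤ K := by
    simp [near]
  obtain ⟨f, hf, hfK⟩ := (all_card_le_biUnion_card_iff_exists_injective near).1 fun F =>
    card_le_card_of_injective_of_dist_snd_le hΦ
      (fun p hp => mem_biUnion.2 ⟨p.1, hp, mem_near.2 (hΦd p).1⟩) fun p => (hΦd p).2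
  exact ⟨f, hf, fun a => mem_near.1 (hfK a)⟩

theorem bde_product_implies_bde_general {r s : ℕ}
    (A B : Set (Fin r → ℤ)) (K : ℝ)
    (h : BDEquivWith (A ×ˢ (Set.univ : Set (Fin s → ℤ)))
      (B ×ˢ (Set.univ : Set (Fin s → ℤ))) K) :
    BDEquivWith A B K :=
  .of_bdInjWith (.of_prod_univ h.bdInjWith) (.of_prod_univ h.symm.bdInjWith)

/-- If `A × ℤ^s` and `B × ℤ^s` are bounded distance equivalent with constant `K`
(as subsets of `ℝ^{r+s}`, with the sup metric), then `A` and `B` are bounded distance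
equivalent with the same constant `K`. -/
theorem bde_product_implies_bde {r s : ℕ} (hs : 0 < s)
    (A B : Set (Fin r → ℤ)) (K : ℝ) (hK : 0 < K)
    (h : BDEquivWith (A ×ˢ (Set.univ : Set (Fin s → ℤ)))
      (B ×ˢ (Set.univ : Set (Fin s → ℤ))) K) :
    BDEquivWith A B K :=
  bde_product_implies_bde_general A B K h
end

section
/- Let L be a discrete subgroup (lattice) of ℝ^m × ℝ^n such that the projection p_2 restricted to L is injective and the image p_2(L) is dense in ℝ^n, and let W, W' ⊆ ℝ^n be bounded sets. For a set V ⊆ ℝ^n write L_V = { γ ∈ L : p_2(γ) ∈ V }. If L_W and L_{W'} are bounded distance equivalent with constant K, then for every x ∈ ℝ^n satisfying (∂W − x) ∩ p_2(L) = ∅ and (∂W' − x) ∩ p_2(L) = ∅, the sets L_{W−x} and L_{W'−x} are bounded distance equivalent with the same constant K. -/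
/-- The lift `L_V = { γ ∈ L : p₂(γ) ∈ V }`. -/
def liftedSet {m n : ℕ} (L : AddSubgroup ((Fin m → ℝ) × (Fin n → ℝ)))
    (V : Set (Fin n → ℝ)) : Set ((Fin m → ℝ) × (Fin n → ℝ)) :=
  {γ | γ ∈ L ∧ γ.2 ∈ V}

/-!
Translating the given bijection by lattice points `γ` with `p₂ γ → x` gives bijections
`L_{W - p₂ γ} → L_{W' - p₂ γ}` that move points by at most `K`. As no point of `p₂(L) + x` lies on
`∂W` or `∂W'`, these windows converge to `W - x` and `W' - x` pointwise on `L`. A lattice point has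
only finitely many lattice points within distance `K`, so along an ultrafilter the translated
bijections stabilise pointwise, and their limit is a bijection `L_{W - x} → L_{W' - x}`.
-/

open Filter Topology

lemma bdEquivWith_iff_exists_bijOn {E : Type*} [MetricSpace E] {X Y : Set E} {K : ℝ} :
    BDEquivWith X Y K ↔ ∃ f : E → E, Set.BijOn f X Y ∧ ∀ a ∈ X, dist (f a) a ≤ K := by
  classical
  constructor
  · rintro ⟨χ, ⟨hinj, hsurj⟩, hdist⟩
    set f : E → E := fun a => if ha : a ∈ X then χ ⟨a, ha⟩ else a
    have hf : ∀ a (ha : a ∈ X), f a = χ ⟨a, ha⟩ := fun a ha => dif_pos ha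
    refine ⟨f, ⟨fun a ha => hf a ha ▸ (χ _).2, fun a ha b hb hab => ?_, fun b hb => ?_⟩,
      fun a ha => hf a ha ▸ hdist _⟩
    · rw [hf a ha, hf b hb] at hab
      exact congrArg Subtype.val (hinj (Subtype.ext hab))
    · obtain ⟨a, ha⟩ := hsurj ⟨b, hb⟩
      exact ⟨a, a.2, (hf a a.2).trans (congrArg Subtype.val ha)⟩
  · rintro ⟨f, hf, hdist⟩
    exact ⟨hf.mapsTo.restrict f X Y, hf.bijective, fun a => hdist a a.2⟩

lemma BDEquivWith.preimage_isometryEquiv {E F : Type*} [MetricSpace E] [MetricSpace F]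
    {X Y : Set F} {K : ℝ} (h : BDEquivWith X Y K) (φ : E ≃ᵢ F) :
    BDEquivWith (φ ⁻¹' X) (φ ⁻¹' Y) K := by
  obtain ⟨f, hf, hdist⟩ := bdEquivWith_iff_exists_bijOn.1 h
  refine bdEquivWith_iff_exists_bijOn.2 ⟨φ.symm ∘ f ∘ φ, ?_, fun a ha => ?_⟩
  · exact (φ.toEquiv.symm.bijOn fun b => by simp).comp (hf.comp φ.bijective.bijOn_preimage)
  · simpa [← φ.dist_eq (φ.symm _)] using hdist _ ha

theorem BDEquivWith.of_eventually_mem_iff {E ι : Type*} [MetricSpace E] {l : Filter ι} [l.NeBot]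
    {S X Y : Set E} {A B : ι → Set E} {K : ℝ}
    (hS : ∀ a, (S ∩ Metric.closedBall a K).Finite) (hAS : ∀ i, A i ⊆ S) (hBS : ∀ i, B i ⊆ S)
    (hAB : ∀ i, BDEquivWith (A i) (B i) K)
    (hA : ∀ a, ∀ᶠ i in l, (a ∈ A i ↔ a ∈ X)) (hB : ∀ b, ∀ᶠ i in l, (b ∈ B i ↔ b ∈ Y)) :
    BDEquivWith X Y K := by
  choose f hf hdist using fun i => bdEquivWith_iff_exists_bijOn.1 (hAB i)
  set U := Ultrafilter.of l
  have hU : ∀ {p : ι → Prop}, (∀ᶠ i in l, p i) → ∀ᶠ i in U, p i := fun h => Ultrafilter.of_le l h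
  have mem_X : ∀ a, (∀ᶠ i in U, a ∈ A i) → a ∈ X := fun a h =>
    (h.and (hU (hA a))).exists.elim fun _ hi => hi.2.1 hi.1
  have mem_Y : ∀ b, (∀ᶠ i in U, b ∈ B i) → b ∈ Y := fun b h =>
    (h.and (hU (hB b))).exists.elim fun _ hi => hi.2.1 hi.1
  have hlim : ∀ a ∈ X, ∃ b ∈ Y, dist b a ≤ K ∧ ∀ᶠ i in U, a ∈ A i ∧ f i a = b := by
    intro a ha
    have hev : ∀ᶠ i in U, ∃ b ∈ S ∩ Metric.closedBall a K, a ∈ A i ∧ f i a = b := by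
      filter_upwards [hU (hA a)] with i hi
      have hai := hi.2 ha
      exact ⟨f i a, ⟨hBS i ((hf i).mapsTo hai), hdist i a hai⟩, hai, rfl⟩
    obtain ⟨b, ⟨-, hb⟩, hbU⟩ := (U.eventually_exists_mem_iff (hS a)).1 hev
    refine ⟨b, mem_Y b ?_, hb, hbU⟩
    filter_upwards [hbU] with i ⟨hai, hfa⟩
    exact hfa ▸ (hf i).mapsTo hai
  choose! φ hφY hφdist hφ using hlim
  refine bdEquivWith_iff_exists_bijOn.2 ⟨φ, ⟨hφY, fun a ha a' ha' h => ?_, fun b hb => ?_⟩, hφdist⟩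
  · obtain ⟨i, ⟨hai, hfa⟩, ⟨ha'i, hfa'⟩⟩ := ((hφ a ha).and (hφ a' ha')).exists
    exact (hf i).injOn hai ha'i (hfa.trans (h.trans hfa'.symm))
  · have hev : ∀ᶠ i in U, ∃ a ∈ S ∩ Metric.closedBall b K, a ∈ A i ∧ f i a = b := by
      filter_upwards [hU (hB b)] with i hi
      obtain ⟨a, hai, rfl⟩ := (hf i).surjOn (hi.2 hb)
      exact ⟨a, ⟨hAS i hai, by simpa [dist_comm] using hdist i a hai⟩, hai, rfl⟩
    obtain ⟨a, -, haU⟩ := (U.eventually_exists_mem_iff (hS b)).1 hev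
    have ha : a ∈ X := mem_X a (haU.mono fun _ hi => hi.1)
    obtain ⟨i, ⟨-, hfa⟩, -, hφa⟩ := (haU.and (hφ a ha)).exists
    exact ⟨a, ha, hφa.symm.trans hfa⟩

lemma eventually_mem_iff_of_notMem_frontier {X : Type*} [TopologicalSpace X] {s : Set X} {y : X}
    (h : y ∉ frontier s) : ∀ᶠ z in 𝓝 y, (z ∈ s ↔ y ∈ s) := by
  rcases (compl_frontier_eq_union_interior (s := s)) ▸ (Set.mem_compl h) with hy | hy
  · filter_upwards [mem_interior_iff_mem_nhds.1 hy] with z hz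
    exact iff_of_true hz (interior_subset hy)
  · filter_upwards [mem_interior_iff_mem_nhds.1 hy] with z hz
    exact iff_of_false hz (interior_subset hy)

section liftedSet

variable {m n : ℕ} {L : AddSubgroup ((Fin m → ℝ) × (Fin n → ℝ))}

lemma preimage_add_liftedSet {γ : (Fin m → ℝ) × (Fin n → ℝ)} (hγ : γ ∈ L) (V : Set (Fin n → ℝ)) :
    (· + γ) ⁻¹' liftedSet L V = liftedSet L ((· + γ.2) ⁻¹' V) := by
  ext a
  simp [liftedSet, L.add_mem_cancel_right hγ]

lemma eventually_mem_liftedSet_iff {ι : Type*} {l : Filter ι} {u : ι → Fin n → ℝ}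
    {V : Set (Fin n → ℝ)} {x : Fin n → ℝ} (hu : Tendsto u l (𝓝 x))
    (hV : ((fun y => y - x) '' frontier V) ∩
      (Prod.snd '' (L : Set ((Fin m → ℝ) × (Fin n → ℝ)))) = ∅)
    (a : (Fin m → ℝ) × (Fin n → ℝ)) :
    ∀ᶠ i in l, (a ∈ liftedSet L ((· + u i) ⁻¹' V) ↔ a ∈ liftedSet L ((· + x) ⁻¹' V)) := by
  by_cases ha : a ∈ L
  · have hfr : a.2 + x ∉ frontier V := fun hfr =>
      Set.eq_empty_iff_forall_notMem.1 hV a.2 ⟨⟨_, hfr, add_sub_cancel_right _ _⟩, a, ha, rfl⟩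
    filter_upwards [(tendsto_const_nhds.add hu).eventually
      (eventually_mem_iff_of_notMem_frontier hfr)] with i hi
    simpa [liftedSet, ha] using hi
  · exact Eventually.of_forall fun i => by simp [liftedSet, ha]

end liftedSet

theorem bde_translated_windows_general {m n : ℕ}
    (L : AddSubgroup ((Fin m → ℝ) × (Fin n → ℝ))) (hdisc : DiscreteTopology L)
    (hdense : Dense (Prod.snd '' (L : Set ((Fin m → ℝ) × (Fin n → ℝ)))))
    (W W' : Set (Fin n → ℝ))
    (K : ℝ)
    (hbde : BDEquivWith (liftedSet L W) (liftedSet L W') K)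
    (x : Fin n → ℝ)
    (hxW : ((fun y => y - x) '' frontier W) ∩
      (Prod.snd '' (L : Set ((Fin m → ℝ) × (Fin n → ℝ)))) = ∅)
    (hxW' : ((fun y => y - x) '' frontier W') ∩
      (Prod.snd '' (L : Set ((Fin m → ℝ) × (Fin n → ℝ)))) = ∅) :
    BDEquivWith (liftedSet L ((fun y => y - x) '' W))
      (liftedSet L ((fun y => y - x) '' W')) K := by
  have hfin : ∀ a, ((L : Set ((Fin m → ℝ) × (Fin n → ℝ))) ∩ Metric.closedBall a K).Finite :=
    fun a => Set.inter_comm _ _ ▸ Metric.finite_isBounded_inter_isClosed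
      DiscreteTopology.isDiscrete Metric.isBounded_closedBall AddSubgroup.isClosed_of_discrete
  let l : Filter L := comap (fun γ => (γ : (Fin m → ℝ) × (Fin n → ℝ)).2) (𝓝 x)
  have : l.NeBot := comap_neBot fun t ht => by
    obtain ⟨_, ⟨γ, hγ, rfl⟩, hγt⟩ := hdense.inter_nhds_nonempty ht
    exact ⟨⟨γ, hγ⟩, hγt⟩
  rw [Set.image_eq_preimage_of_inverse (g := (· + x)) (sub_add_cancel · x)
    (add_sub_cancel_right · x)]
  refine BDEquivWith.of_eventually_mem_iff (l := l) hfin (fun _ _ h => h.1) (fun _ _ h => h.1)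
    (fun γ => ?_) (eventually_mem_liftedSet_iff tendsto_comap hxW)
    (eventually_mem_liftedSet_iff tendsto_comap hxW')
  rw [← preimage_add_liftedSet γ.2, ← preimage_add_liftedSet γ.2]
  exact hbde.preimage_isometryEquiv (IsometryEquiv.addRight (γ : (Fin m → ℝ) × (Fin n → ℝ)))

/-- Let `L` be a discrete subgroup (lattice) of `ℝ^m × ℝ^n` with `p₂|_L` injective and
`p₂(L)` dense in `ℝ^n`, and let `W, W'` be bounded sets. If `L_W` and `L_{W'}` are bounded
distance equivalent with constant `K`, then for every `x ∈ ℝ^n` with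
`(∂W − x) ∩ p₂(L) = ∅` and `(∂W' − x) ∩ p₂(L) = ∅`, the sets `L_{W−x}` and `L_{W'−x}`
are bounded distance equivalent with the same constant `K`. -/
theorem bde_translated_windows {m n : ℕ}
    (L : AddSubgroup ((Fin m → ℝ) × (Fin n → ℝ))) (hdisc : DiscreteTopology L)
    (hinj : Set.InjOn Prod.snd (L : Set ((Fin m → ℝ) × (Fin n → ℝ))))
    (hdense : Dense (Prod.snd '' (L : Set ((Fin m → ℝ) × (Fin n → ℝ)))))
    (W W' : Set (Fin n → ℝ))
    (hWbd : Bornology.IsBounded W) (hW'bd : Bornology.IsBounded W')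
    (K : ℝ) (hK : 0 < K)
    (hbde : BDEquivWith (liftedSet L W) (liftedSet L W') K)
    (x : Fin n → ℝ)
    (hxW : ((fun y => y - x) '' frontier W) ∩
      (Prod.snd '' (L : Set ((Fin m → ℝ) × (Fin n → ℝ)))) = ∅)
    (hxW' : ((fun y => y - x) '' frontier W') ∩
      (Prod.snd '' (L : Set ((Fin m → ℝ) × (Fin n → ℝ)))) = ∅) :
    BDEquivWith (liftedSet L ((fun y => y - x) '' W))
      (liftedSet L ((fun y => y - x) '' W')) K :=
  bde_translated_windows_general L hdisc hdense W W' K hbde x hxW hxW'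
end

section
/- Let L ⊆ ℝ × ℝ^d be a lattice in general position, i.e., the restriction of p_1 to L is injective and p_2(L) is dense in ℝ^d. Then there exist a nonzero real number a, an invertible d × d real matrix B, and column vectors α = (α_1, …, α_d)ᵀ, β = (β_1, …, β_d)ᵀ ∈ ℝ^d satisfying: (i) the numbers 1, α_1, …, α_d are linearly independent over the rationals, and (ii) the numbers β_1, …, β_d, 1 + βᵀα are linearly independent over the rationals, such that the invertible linear map T(x, y) = (a x, B y) satisfies T(L) = Γ, where Γ = { ( n + βᵀ(nα + m), nα + m ) : n ∈ ℤ, m ∈ ℤ^d }. -/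
/-- A lattice in a real normed space: a discrete subgroup whose real span is everything
(i.e. a discrete subgroup of full rank). -/
def IsLattice {E : Type*} [NormedAddCommGroup E] [NormedSpace ℝ E]
    (Γ : AddSubgroup E) : Prop :=
  DiscreteTopology Γ ∧ Submodule.span ℝ (Γ : Set E) = ⊤

/-- The lattice of special form determined by vectors `α, β ∈ ℝ^d`:
`Γ = { (n + βᵀ(nα + m), nα + m) : n ∈ ℤ, m ∈ ℤ^d }`. -/
def specialFormLattice {d : ℕ} (α β : Fin d → ℝ) : Set (ℝ × (Fin d → ℝ)) :=
  {p | ∃ (n : ℤ) (m : Fin d → ℤ),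
    p = ((n : ℝ) + ∑ i, β i * ((n : ℝ) • α + fun j => (m j : ℝ)) i,
         (n : ℝ) • α + fun j => (m j : ℝ))}

/-!
Pick a `ℤ`-basis `u₀, …, u_d` of `L` whose last `d` vectors have linearly independent
`ℝ^d`-components `w₁, …, w_d`; this is possible because `p₂(L)` spans `ℝ^d`. Let `B` send `wⱼ`
to `eⱼ` and write `B p₂(u₀) = α`. Since `u₀ - ∑ αⱼ uⱼ ≠ 0` has vanishing `ℝ^d`-component, its
first coordinate `δ` is nonzero, and `a = δ⁻¹` maps the basis onto
`(1 + βᵀα, α), (β₁, e₁), …, (β_d, e_d)` with `βⱼ = a p₁(uⱼ)`, a `ℤ`-basis of `Γ`.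

Both independence conditions survive the transformation. An integer relation
`k₀ + ∑ kⱼ αⱼ = 0` makes `y ↦ ∑ kⱼ yⱼ` integer-valued on the dense set `p₂(Γ)`, hence everywhere,
forcing `k = 0`. An integer relation among `1 + βᵀα, β₁, …, β_d` is the first coordinate of a
point of `Γ` with `p₁ = 0`, which injectivity of `p₁` forces to be `0`.
-/

open Set Submodule

lemma LinearMap.eq_zero_of_forall_exists_intCast {E : Type*} [AddCommGroup E] [Module ℝ E]
    (f : E →ₗ[ℝ] ℝ) (h : ∀ x, ∃ k : ℤ, f x = k) : f = 0 := by
  ext x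
  by_contra hx
  change f x ≠ 0 at hx
  obtain ⟨k, hk⟩ := h ((2 * f x)⁻¹ • x)
  have hk2 : ((2 * k : ℤ) : ℝ) = 1 := by
    rw [map_smul, smul_eq_mul] at hk
    push_cast
    rw [← hk]
    field_simp
  have : 2 * k = 1 := by exact_mod_cast hk2
  omega

lemma Set.InjOn.fst_image_prodMap {X X' Y Y' : Type*} {s : Set (X × Y)} {f : X → X'}
    (g : Y → Y') (hs : InjOn Prod.fst s) (hf : Function.Injective f) :
    InjOn Prod.fst (Prod.map f g '' s) := by
  rintro _ ⟨x, hx, rfl⟩ _ ⟨y, hy, rfl⟩ hxy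
  rw [hs hx hy (hf hxy)]

lemma Dense.snd_image_prodMap {X X' Y Y' : Type*} [TopologicalSpace Y] [TopologicalSpace Y']
    {s : Set (X × Y)} (f : X → X') {g : Y → Y'} (hs : Dense (Prod.snd '' s))
    (hg : DenseRange g) (hgc : Continuous g) : Dense (Prod.snd '' (Prod.map f g '' s)) := by
  rw [image_image, show (fun x : X × Y => (Prod.map f g x).2) = g ∘ Prod.snd from rfl,
    image_comp]
  exact hg.dense_image hgc hs

lemma AddMonoidHom.image_span_int_range {M N ι : Type*} [AddCommGroup M] [AddCommGroup N]
    (f : M →+ N) (v : ι → M) : f '' span ℤ (Set.range v) = span ℤ (Set.range (f ∘ v)) := by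
  rw [← f.coe_toIntLinearMap, ← Submodule.map_coe, Submodule.map_span, Set.range_comp]

lemma exists_linearIndependent_subtype_ne {K V ι : Type*} [DivisionRing K] [AddCommGroup V]
    [Module K V] [FiniteDimensional K V] [Fintype ι] (v : ι → V)
    (hspan : span K (range v) = ⊤) (hcard : Fintype.card ι = Module.finrank K V + 1) :
    ∃ i₀, LinearIndependent K fun i : {i // i ≠ i₀} => v i.1 := by
  classical
  obtain ⟨κ, a, ha, hspan_a, hli⟩ := exists_linearIndependent' K v
  have : Fintype κ := Fintype.ofInjective a ha
  have hκ : Fintype.card κ = Module.finrank K V := by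
    rw [← finrank_span_eq_card hli, hspan_a, hspan, finrank_top]
  obtain ⟨i₀, hi₀⟩ : ∃ i₀, i₀ ∉ range a := by
    by_contra! h
    have := Fintype.card_le_of_surjective a fun i => h i
    omega
  refine ⟨i₀, linearIndependent_of_top_le_span_of_card_eq_finrank ?_ ?_⟩
  · rw [← hspan, ← hspan_a]
    refine span_mono ?_
    rintro _ ⟨k, rfl⟩
    exact ⟨⟨a k, fun h => hi₀ ⟨k, h⟩⟩, rfl⟩
  · rw [Fintype.card_subtype_compl, Fintype.card_subtype_eq]
    omega

section SpecialForm

variable {d : ℕ}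

/-- The points `(n, m) = (1, 0)` and `(0, eᵢ)` of `specialFormLattice α β`. -/
def specialFormBasis (α β : Fin d → ℝ) : Option (Fin d) → ℝ × (Fin d → ℝ) :=
  fun o => o.elim (1 + ∑ i, β i * α i, α) fun i => (β i, Pi.single i 1)

lemma sum_zsmul_specialFormBasis (α β : Fin d → ℝ) (n : Option (Fin d) → ℤ) :
    ∑ o, n o • specialFormBasis α β o =
      ((n none : ℝ) + ∑ i, β i * ((n none : ℝ) • α + fun j => (n (some j) : ℝ)) i,
        (n none : ℝ) • α + fun j => (n (some j) : ℝ)) := by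
  ext
  · have hterm (i : Fin d) : β i * ((n none : ℝ) * α i + n (some i)) =
        n none * (β i * α i) + n (some i) * β i := by ring
    simp only [specialFormBasis, zsmul_eq_mul, Fintype.sum_option, Option.elim_none,
      Option.elim_some, Prod.fst_add, Prod.fst_mul, Prod.fst_intCast, Prod.fst_sum, Pi.add_apply,
      Pi.smul_apply, smul_eq_mul, hterm, Finset.sum_add_distrib, ← Finset.mul_sum]
    ring
  · simp [Fintype.sum_option, specialFormBasis, Prod.snd_sum, Pi.single_apply, zsmul_eq_mul]

lemma specialFormLattice_eq_span (α β : Fin d → ℝ) :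
    specialFormLattice α β = span ℤ (range (specialFormBasis α β)) := by
  ext p
  rw [SetLike.mem_coe, mem_span_range_iff_exists_fun]
  simp only [specialFormLattice, mem_ofPred_eq, sum_zsmul_specialFormBasis]
  constructor
  · rintro ⟨n, m, rfl⟩
    exact ⟨fun o => o.elim n m, rfl⟩
  · rintro ⟨n, rfl⟩
    exact ⟨n none, n ∘ some, rfl⟩

lemma linearIndependent_specialFormBasis (α β : Fin d → ℝ) :
    LinearIndependent ℝ (specialFormBasis α β) := by
  rw [Fintype.linearIndependent_iff]
  intro g hg
  simp only [specialFormBasis, Fintype.sum_option, Option.elim_none, Prod.smul_mk, smul_eq_mul,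
    Option.elim_some, Prod.ext_iff, Prod.fst_add, Prod.fst_sum, Prod.fst_zero, Prod.snd_add,
    Prod.snd_sum, Prod.snd_zero, funext_iff, Pi.add_apply, Pi.smul_apply, Finset.sum_apply,
    Pi.single_apply, mul_ite, mul_one, mul_zero, Finset.sum_ite_eq, Finset.mem_univ, ↓reduceIte,
    Pi.zero_apply] at hg
  obtain ⟨hfst, hsnd⟩ := hg
  have hsome (i : Fin d) : g (some i) = -(g none * α i) := eq_neg_of_add_eq_zero_right (hsnd i)
  have hnone : g none = 0 := by
    calc g none = g none * (1 + ∑ i, β i * α i) + ∑ i, -(g none * α i) * β i := by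
          rw [Finset.sum_congr rfl fun i _ =>
              (by ring : -(g none * α i) * β i = -(g none * (β i * α i))),
            Finset.sum_neg_distrib, ← Finset.mul_sum]
          ring
      _ = 0 := by simpa only [hsome] using hfst
  rintro (_ | i)
  · exact hnone
  · simp [hsome, hnone]

lemma linearIndependent_of_injOn_fst {α β : Fin d → ℝ}
    (hinj : InjOn Prod.fst (specialFormLattice α β)) :
    LinearIndependent ℤ fun o : Option (Fin d) => o.elim ((1 : ℝ) + ∑ i, β i * α i) β := by
  have hfst : (fun o : Option (Fin d) => o.elim ((1 : ℝ) + ∑ i, β i * α i) β) =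
      LinearMap.fst ℤ ℝ (Fin d → ℝ) ∘ specialFormBasis α β := by
    funext o
    cases o <;> rfl
  rw [hfst]
  refine ((linearIndependent_specialFormBasis α β).restrict_scalars' ℤ).map ?_
  rw [disjoint_def]
  intro x hx hker
  rw [← SetLike.mem_coe, ← specialFormLattice_eq_span] at hx
  have h0 : (0 : ℝ × (Fin d → ℝ)) ∈ specialFormLattice α β := by
    rw [specialFormLattice_eq_span]; exact zero_mem _
  exact hinj hx h0 hker

lemma linearIndependent_of_dense_snd_image {α β : Fin d → ℝ}
    (hdense : Dense (Prod.snd '' specialFormLattice α β)) :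
    LinearIndependent ℤ fun o : Option (Fin d) => o.elim (1 : ℝ) α := by
  rw [Fintype.linearIndependent_iff]
  intro k hk
  simp only [Fintype.sum_option, Option.elim, zsmul_eq_mul, mul_one] at hk
  let ψ : (Fin d → ℝ) →ₗ[ℝ] ℝ := Fintype.linearCombination ℝ fun j => (k (some j) : ℝ)
  have hψ : ∀ y, ∃ m : ℤ, ψ y = m := by
    have hsub : ψ '' (Prod.snd '' specialFormLattice α β) ⊆ range ((↑) : ℤ → ℝ) := by
      rintro _ ⟨_, ⟨_, ⟨n, m, rfl⟩, rfl⟩, rfl⟩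
      refine ⟨-n * k none + ∑ j, k (some j) * m j, ?_⟩
      have hα : ∑ j, (k (some j) : ℝ) * α j = -k none := by linarith
      calc ((-n * k none + ∑ j, k (some j) * m j : ℤ) : ℝ)
          = n * ∑ j, (k (some j) : ℝ) * α j + ∑ j, (k (some j) : ℝ) * m j := by
            rw [hα]; push_cast; ring
        _ = ψ ((n : ℝ) • α + fun j => (m j : ℝ)) := by
            rw [Finset.mul_sum, ← Finset.sum_add_distrib, Fintype.linearCombination_apply]
            refine Finset.sum_congr rfl fun j _ => ?_
            simp only [Pi.add_apply, Pi.smul_apply, smul_eq_mul]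
            ring
    intro y
    obtain ⟨m, hm⟩ := closure_minimal hsub Int.isClosedEmbedding_coe_real.isClosed_range
      (ψ.continuous_of_finiteDimensional.range_subset_closure_image_dense hdense ⟨y, rfl⟩)
    exact ⟨m, hm.symm⟩
  have hsome (j : Fin d) : k (some j) = 0 := by
    have := LinearMap.congr_fun (ψ.eq_zero_of_forall_exists_intCast hψ) (Pi.single j 1)
    simpa [ψ, Fintype.linearCombination_apply, Pi.single_apply] using this
  have hnone : k none = 0 := by simpa [hsome] using hk
  rintro (_ | j)
  · exact hnone
  · exact hsome j

lemma exists_basis_span_int_eq_of_isLattice (L : AddSubgroup (ℝ × (Fin d → ℝ)))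
    (hL : IsLattice L) :
    ∃ u : Module.Basis (Option (Fin d)) ℝ (ℝ × (Fin d → ℝ)),
      (span ℤ (range u) : Set (ℝ × (Fin d → ℝ))) = L ∧
      LinearIndependent ℝ fun i => (u (some i)).2 := by
  classical
  let L' := L.toIntSubmodule
  have : DiscreteTopology L' := hL.1
  have : IsZLattice ℝ L' := ⟨hL.2⟩
  let b := (Module.Free.chooseBasis ℤ L').ofZLatticeBasis ℝ L'
  have hcard : Fintype.card (Module.Free.ChooseBasisIndex ℤ L') =
      Module.finrank ℝ (Fin d → ℝ) + 1 := by
    rw [← Module.finrank_eq_card_chooseBasisIndex, ZLattice.rank ℝ L']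
    simp [add_comm]
  have hspan : span ℝ (range fun i => (b i).2) = ⊤ := by
    rw [show (fun i => (b i).2) = LinearMap.snd ℝ ℝ (Fin d → ℝ) ∘ b from rfl, Set.range_comp,
      Submodule.span_image, b.span_eq, Submodule.map_top,
      LinearMap.range_eq_top.2 LinearMap.snd_surjective]
  obtain ⟨i₀, hi₀⟩ := exists_linearIndependent_subtype_ne _ hspan hcard
  have hcard₀ : Fintype.card {i // i ≠ i₀} = d := by
    rw [Fintype.card_subtype_compl, Fintype.card_subtype_eq]
    simp [hcard]
  let e : Fin d ≃ {i // i ≠ i₀} := (Fintype.equivFinOfCardEq hcard₀).symm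
  let u := b.reindex ((Equiv.optionCongr e).trans (Equiv.optionSubtypeNe i₀)).symm
  have hu : (fun i => (u (some i)).2) = (fun i : {i // i ≠ i₀} => (b i).2) ∘ e := by
    funext i
    simp [u]
  refine ⟨u, ?_, hu ▸ hi₀.comp e e.injective⟩
  rw [Module.Basis.range_reindex, Module.Basis.ofZLatticeBasis_span]
  rfl

lemma exists_prodMap_eq_specialFormBasis
    (u : Module.Basis (Option (Fin d)) ℝ (ℝ × (Fin d → ℝ)))
    (hu : LinearIndependent ℝ fun i => (u (some i)).2) :
    ∃ (a : ℝ) (B : Matrix (Fin d) (Fin d) ℝ) (α β : Fin d → ℝ), a ≠ 0 ∧ IsUnit B.det ∧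
      ∀ o, Prod.map (a * ·) B.mulVec (u o) = specialFormBasis α β o := by
  classical
  let w := basisOfLinearIndependentOfCardEqFinrank' _ hu (by simp)
  have hw (j : Fin d) : w j = (u (some j)).2 := by simp [w]
  set α := w.equivFun (u none).2
  have hδ : (u none).1 - ∑ j, (u (some j)).1 * α j ≠ 0 := by
    intro h0
    have hrel : u none - ∑ j, α j • u (some j) = 0 := by
      refine Prod.ext ?_ ?_
      · simpa [Prod.fst_sum, mul_comm] using h0
      · simp only [Prod.snd_sub, Prod.snd_sum, Prod.smul_snd, Prod.snd_zero, sub_eq_zero]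
        conv_lhs => rw [← w.sum_equivFun (u none).2]
        simp only [hw, α]
    have := Fintype.linearIndependent_iff.1 u.linearIndependent (fun o => o.elim 1 (-α ·))
      (by simpa [Fintype.sum_option, sub_eq_add_neg] using hrel) none
    exact one_ne_zero this
  set a := ((u none).1 - ∑ j, (u (some j)).1 * α j)⁻¹
  refine ⟨a, LinearMap.toMatrix' w.equivFun.toLinearMap, α, fun j => a * (u (some j)).1,
    inv_ne_zero hδ, ?_, ?_⟩
  · rw [LinearMap.det_toMatrix']
    exact LinearEquiv.isUnit_det' _
  · rintro (_ | j)
    · refine Prod.ext ?_ ?_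
      · have hδa : a * ((u none).1 - ∑ j, (u (some j)).1 * α j) = 1 := inv_mul_cancel₀ hδ
        simp only [specialFormBasis, Prod.map_fst, Option.elim, mul_assoc, ← Finset.mul_sum]
        linear_combination hδa
      · simp [specialFormBasis, α]
    · refine Prod.ext rfl ?_
      simp [specialFormBasis, ← hw, Finsupp.single_eq_pi_single]

end SpecialForm

/-- Every lattice `L ⊆ ℝ × ℝ^d` in general position (i.e. `p₁|_L` injective, `p₂(L)`
dense) is mapped onto a lattice of special form by an invertible linear transformation
`T(x, y) = (a x, B y)`. -/
theorem exists_special_form {d : ℕ}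
    (L : AddSubgroup (ℝ × (Fin d → ℝ))) (hL : IsLattice L)
    (hinj : Set.InjOn Prod.fst (L : Set (ℝ × (Fin d → ℝ))))
    (hdense : Dense (Prod.snd '' (L : Set (ℝ × (Fin d → ℝ))))) :
    ∃ (a : ℝ) (B : Matrix (Fin d) (Fin d) ℝ) (α β : Fin d → ℝ),
      a ≠ 0 ∧ IsUnit B.det ∧
      LinearIndependent ℚ (fun o : Option (Fin d) => o.elim (1 : ℝ) α) ∧
      LinearIndependent ℚ (fun o : Option (Fin d) =>
        o.elim ((1 : ℝ) + ∑ i, β i * α i) β) ∧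
      (fun p : ℝ × (Fin d → ℝ) => (a * p.1, B.mulVec p.2)) ''
          (L : Set (ℝ × (Fin d → ℝ))) = specialFormLattice α β := by
  obtain ⟨u, hLu, hu⟩ := exists_basis_span_int_eq_of_isLattice L hL
  obtain ⟨a, B, α, β, ha, hB, huv⟩ := exists_prodMap_eq_specialFormBasis u hu
  let T := (AddMonoidHom.mulLeft a).prodMap B.mulVecLin.toAddMonoidHom
  have hT : T '' L = specialFormLattice α β := by
    rw [← hLu, T.image_span_int_range, specialFormLattice_eq_span,
      show ⇑T ∘ ⇑u = specialFormBasis α β from funext huv]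
  have hB' : Function.Surjective B.mulVec :=
    Matrix.mulVec_surjective_iff_isUnit.2 (B.isUnit_iff_isUnit_det.2 hB)
  have hdense' : Dense (Prod.snd '' specialFormLattice α β) :=
    hT ▸ hdense.snd_image_prodMap _ hB'.denseRange
      (Continuous.matrix_mulVec continuous_const continuous_id)
  have hinj' : InjOn Prod.fst (specialFormLattice α β) :=
    hT ▸ hinj.fst_image_prodMap B.mulVec (mul_right_injective₀ ha)
  refine ⟨a, B, α, β, ha, hB, ?_, ?_, hT⟩
  · exact (LinearIndependent.iff_fractionRing ℤ ℚ).1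
      (linearIndependent_of_dense_snd_image hdense')
  · exact (LinearIndependent.iff_fractionRing ℤ ℚ).1 (linearIndependent_of_injOn_fst hinj')
end

section
/- Let Γ = { ( n + βᵀ(nα + m), nα + m ) : n ∈ ℤ, m ∈ ℤ^d } be a lattice of special form in ℝ × ℝ^d, and let W ⊆ ℝ^d be a bounded set. Then there exists a constant C = C(Γ, W) such that for every positive integer N, |ν(Λ(Γ, W), N) − Σ_{n=0}^{N−1} χ_W(nα)| ≤ C. -/
open MeasureTheory
open Pointwise

/-- The multiplicity function `χ_W(x) = Σ_{m ∈ ℤ^d} 1_W(x + m)`. -/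
noncomputable def chiFun {d : ℕ} (W : Set (Fin d → ℝ)) (x : Fin d → ℝ) : ℝ :=
  ∑' k : Fin d → ℤ, Set.indicator W 1 (x + fun i => (k i : ℝ))

/-- The point counting function of a uniformly discrete set `Λ ⊆ ℝ`:
`ν(Λ, x) = #(Λ ∩ [0, x))` for `x ≥ 0` and `ν(Λ, x) = −#(Λ ∩ [x, 0))` for `x < 0`. -/
noncomputable def countingFunction (Λ : Set ℝ) (x : ℝ) : ℤ :=
  if 0 ≤ x then ((Λ ∩ Set.Ico 0 x).ncard : ℤ) else -((Λ ∩ Set.Ico x 0).ncard : ℤ)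

/-- The model set obtained from the lattice of special form
`Γ = { (n + βᵀ(nα + m), nα + m) : n ∈ ℤ, m ∈ ℤ^d }` and the window `W`:
`Λ(Γ, W) = { p₁(γ) : γ ∈ Γ, p₂(γ) ∈ W }`. -/
def specialModelSet {d : ℕ} (α β : Fin d → ℝ) (W : Set (Fin d → ℝ)) : Set ℝ :=
  {x | ∃ (n : ℤ) (m : Fin d → ℤ),
    ((n : ℝ) • α + fun j => (m j : ℝ)) ∈ W ∧
    x = (n : ℝ) + ∑ i, β i * ((n : ℝ) • α + fun j => (m j : ℝ)) i}

/-- Integer points in a bounded subset of `ℝ^d` form a finite set. -/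
lemma intPoints_finite {d : ℕ} {S : Set (Fin d → ℝ)} (hS : Bornology.IsBounded S) :
    {k : Fin d → ℤ | (fun i => (k i : ℝ)) ∈ S}.Finite := by
  obtain ⟨R, hR⟩ := isBounded_iff_forall_norm_le.mp hS
  have hsub : {k : Fin d → ℤ | (fun i => (k i : ℝ)) ∈ S} ⊆
      Set.pi Set.univ (fun _ : Fin d => Set.Icc (⌈-R⌉ : ℤ) ⌊R⌋) := by
    intro k hk i _
    have h1 : |(k i : ℝ)| ≤ R := by
      have h2 := norm_le_pi_norm (fun i => (k i : ℝ)) i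
      have h3 := hR _ hk
      simp only [Real.norm_eq_abs] at *
      linarith
    rw [abs_le] at h1
    exact ⟨Int.ceil_le.mpr (by linarith), Int.le_floor.mpr h1.2⟩
  exact (Set.Finite.pi (fun _ => Set.finite_Icc _ _)).subset hsub

/-- The fiber set of integer translates landing in `W`. -/
def fiberSet {d : ℕ} (W : Set (Fin d → ℝ)) (x : Fin d → ℝ) : Set (Fin d → ℤ) :=
  {k | (x + fun i => (k i : ℝ)) ∈ W}

lemma fiberSet_finite {d : ℕ} {W : Set (Fin d → ℝ)} (hW : Bornology.IsBounded W)
    (x : Fin d → ℝ) : (fiberSet W x).Finite := by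
  obtain ⟨R, hR⟩ := isBounded_iff_forall_norm_le.mp hW
  have hb : Bornology.IsBounded {y : Fin d → ℝ | x + y ∈ W} := by
    rw [isBounded_iff_forall_norm_le]
    refine ⟨R + ‖x‖, fun y hy => ?_⟩
    have h1 := hR _ hy
    have h2 : ‖y‖ = ‖(x + y) - x‖ := by rw [add_sub_cancel_left]
    have h3 : ‖(x + y) - x‖ ≤ ‖x + y‖ + ‖x‖ := norm_sub_le _ _
    linarith
  exact intPoints_finite hb

lemma chiFun_eq_ncard {d : ℕ} {W : Set (Fin d → ℝ)} (hW : Bornology.IsBounded W)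
    (x : Fin d → ℝ) : chiFun W x = ((fiberSet W x).ncard : ℝ) := by
  have hfin := fiberSet_finite hW x
  rw [chiFun, tsum_eq_sum (s := hfin.toFinset)
    (fun k hk => Set.indicator_of_notMem (by simpa [fiberSet] using hk) _)]
  rw [Finset.sum_congr rfl (fun k hk => Set.indicator_of_mem
      (by simpa [fiberSet] using hk) (1 : (Fin d → ℝ) → ℝ))]
  simp [Set.ncard_eq_toFinset_card _ hfin]

/-- Uniform bound for fibers: card of any fiber is at most the number of integer
points in the difference set `W - W`. -/
lemma fiberSet_ncard_le {d : ℕ} {W : Set (Fin d → ℝ)} (hW : Bornology.IsBounded W)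
    (x : Fin d → ℝ) :
    (fiberSet W x).ncard ≤ {j : Fin d → ℤ | (fun i => (j i : ℝ)) ∈ W - W}.ncard := by
  rcases (fiberSet W x).eq_empty_or_nonempty with h | ⟨k₀, hk₀⟩
  · simp [h]
  · have hD : {j : Fin d → ℤ | (fun i => (j i : ℝ)) ∈ W - W}.Finite :=
      intPoints_finite (hW.sub hW)
    have himg : (fun k => k - k₀) '' fiberSet W x ⊆
        {j : Fin d → ℤ | (fun i => (j i : ℝ)) ∈ W - W} := by
      rintro j ⟨k, hk, rfl⟩
      refine Set.mem_setOf.mpr ⟨x + fun i => (k i : ℝ), hk, x + fun i => (k₀ i : ℝ), hk₀, ?_⟩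
      funext i
      push_cast
      simp
    calc (fiberSet W x).ncard = ((fun k => k - k₀) '' fiberSet W x).ncard :=
          (Set.ncard_image_of_injective _ (sub_left_injective)).symm
    _ ≤ _ := Set.ncard_le_ncard himg hD

/-- Injectivity of `(n, m) ↦ n(1+β·α) + β·m` from the linear independence hypothesis. -/
lemma phi_injective {d : ℕ} (α β : Fin d → ℝ)
    (hβ : LinearIndependent ℚ (fun o : Option (Fin d) =>
      o.elim ((1 : ℝ) + ∑ i, β i * α i) β)) :
    Function.Injective (fun p : ℤ × (Fin d → ℤ) =>
      (p.1 : ℝ) * ((1 : ℝ) + ∑ i, β i * α i) + ∑ i, β i * (p.2 i : ℝ)) := by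
  rintro ⟨n, m⟩ ⟨n', m'⟩ h
  simp only at h
  have key : ((n - n' : ℤ) : ℝ) * ((1 : ℝ) + ∑ i, β i * α i)
      + ∑ i, ((m i - m' i : ℤ) : ℝ) * β i = 0 := by
    push_cast
    rw [Finset.sum_congr rfl (fun i _ => by ring :
      ∀ i ∈ Finset.univ, ((m i : ℝ) - m' i) * β i = β i * (m i : ℝ) - β i * (m' i : ℝ))]
    rw [Finset.sum_sub_distrib]
    linarith
  set g : Option (Fin d) → ℚ := fun o => o.elim ((n - n' : ℤ) : ℚ) (fun i => ((m i - m' i : ℤ) : ℚ)) with hg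
  have e1 : ∀ (q : ℤ) (x : ℝ), ((q : ℚ)) • x = (q : ℝ) * x := by
    intro q x
    rw [Rat.smul_def]
    push_cast
    ring
  have hsum : ∑ o : Option (Fin d), g o • (fun o : Option (Fin d) =>
      o.elim ((1 : ℝ) + ∑ i, β i * α i) β) o = 0 := by
    rw [Fintype.sum_option]
    simp only [hg, Option.elim, e1]
    exact key
  have hzero := Fintype.linearIndependent_iff.mp hβ g hsum
  have h1 : n = n' := by
    have := hzero none
    simp only [hg, Option.elim] at this
    have : (n - n' : ℤ) = 0 := by exact_mod_cast this
    omega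
  have h2 : m = m' := by
    funext i
    have := hzero (some i)
    simp only [hg, Option.elim] at this
    have : (m i - m' i : ℤ) = 0 := by exact_mod_cast this
    omega
  exact Prod.ext h1 h2

/-- For a lattice of special form with parameters `α, β` and a bounded window `W ⊆ ℝ^d`,
the counting function of the model set satisfies
`ν(Λ(Γ, W), N) = Σ_{n=0}^{N−1} χ_W(nα) + O(1)`. -/
theorem counting_modelSet_eq_birkhoff_sum {d : ℕ} (α β : Fin d → ℝ)
    (hα : LinearIndependent ℚ (fun o : Option (Fin d) => o.elim (1 : ℝ) α))
    (hβ : LinearIndependent ℚ (fun o : Option (Fin d) =>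
      o.elim ((1 : ℝ) + ∑ i, β i * α i) β))
    (W : Set (Fin d → ℝ)) (hW : Bornology.IsBounded W) :
    ∃ C : ℝ, ∀ N : ℕ, 0 < N →
      |(countingFunction (specialModelSet α β W) (N : ℝ) : ℝ) -
        ∑ n ∈ Finset.range N, chiFun W ((n : ℝ) • α)| ≤ C := by
  classical
  obtain ⟨R₀, hR₀⟩ := isBounded_iff_forall_norm_le.mp hW
  -- bound for |β · w| over w ∈ W
  set B : ℝ := (∑ i, |β i|) * max R₀ 0 with hBdef
  have hB0 : 0 ≤ B := mul_nonneg (Finset.sum_nonneg fun i _ => abs_nonneg _)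
    (le_max_right _ _)
  have hβw : ∀ w ∈ W, |∑ i, β i * w i| ≤ B := by
    intro w hw
    calc |∑ i, β i * w i| ≤ ∑ i, |β i * w i| := Finset.abs_sum_le_sum_abs _ _
    _ ≤ ∑ i, |β i| * max R₀ 0 := by
        refine Finset.sum_le_sum fun i _ => ?_
        rw [abs_mul]
        refine mul_le_mul_of_nonneg_left ?_ (abs_nonneg _)
        have h1 := norm_le_pi_norm w i
        have h2 := hR₀ _ hw
        simp only [Real.norm_eq_abs] at h1
        exact le_trans (le_trans h1 h2) (le_max_left _ _)
    _ = B := by rw [hBdef, Finset.sum_mul]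
  obtain ⟨c, hcdef⟩ : ∃ c : ℕ, c = ⌈B⌉₊ + 1 := ⟨_, rfl⟩
  have hBc : B ≤ (c : ℝ) := by
    calc B ≤ (⌈B⌉₊ : ℝ) := Nat.le_ceil B
    _ ≤ (c : ℝ) := by rw [hcdef]; exact_mod_cast Nat.le_succ _
  obtain ⟨M, hMdef⟩ : ∃ M : ℕ,
      M = {j : Fin d → ℤ | (fun i => (j i : ℝ)) ∈ W - W}.ncard := ⟨_, rfl⟩
  have hfib_le : ∀ x, (fiberSet W x).ncard ≤ M := fun x => by
    rw [hMdef]; exact fiberSet_ncard_le hW x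
  clear hcdef hMdef
  refine ⟨(((4 * c + 2) * M : ℕ) : ℝ), fun N hN => ?_⟩
  -- the parametrizing map
  set Φ : ℤ × (Fin d → ℤ) → ℝ := fun p =>
    (p.1 : ℝ) + ∑ i, β i * ((p.1 : ℝ) • α + fun j => (p.2 j : ℝ)) i with hΦdef
  have hΦval : ∀ p : ℤ × (Fin d → ℤ),
      Φ p = (p.1 : ℝ) * ((1 : ℝ) + ∑ i, β i * α i) + ∑ i, β i * (p.2 i : ℝ) := by
    intro p
    simp only [hΦdef, Pi.add_apply, Pi.smul_apply, smul_eq_mul]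
    have h1 : ∀ i ∈ Finset.univ, β i * ((p.1 : ℝ) * α i + (p.2 i : ℝ)) =
        (p.1 : ℝ) * (β i * α i) + β i * (p.2 i : ℝ) := fun i _ => by ring
    rw [Finset.sum_congr rfl h1, Finset.sum_add_distrib, ← Finset.mul_sum]
    ring
  have hΦinj : Function.Injective Φ := by
    have : Φ = fun p : ℤ × (Fin d → ℤ) =>
        (p.1 : ℝ) * ((1 : ℝ) + ∑ i, β i * α i) + ∑ i, β i * (p.2 i : ℝ) :=
      funext hΦval
    rw [this]
    exact phi_injective α β hβ
  -- the two index sets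
  set P : Set (ℤ × (Fin d → ℤ)) := {p | ((p.1 : ℝ) • α + fun j => (p.2 j : ℝ)) ∈ W ∧
    Φ p ∈ Set.Ico (0 : ℝ) (N : ℝ)} with hPdef
  set Q : Set (ℤ × (Fin d → ℤ)) := {p | ((p.1 : ℝ) • α + fun j => (p.2 j : ℝ)) ∈ W ∧
    p.1 ∈ Set.Ico (0 : ℤ) (N : ℤ)} with hQdef
  -- counting function equals #P
  have hset : specialModelSet α β W ∩ Set.Ico 0 (N : ℝ) = Φ '' P := by
    ext x
    constructor
    · rintro ⟨⟨n, m, hwm, hx⟩, hxI⟩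
      refine ⟨(n, m), ⟨hwm, ?_⟩, ?_⟩
      · have hx' : Φ (n, m) = x := hx.symm
        rw [hx']
        exact hxI
      · exact (show Φ (n, m) = x from hx.symm)
    · rintro ⟨p, ⟨hwm, hpI⟩, rfl⟩
      exact ⟨⟨p.1, p.2, hwm, rfl⟩, hpI⟩
  have hcount : countingFunction (specialModelSet α β W) (N : ℝ) = (P.ncard : ℤ) := by
    rw [countingFunction, if_pos (by positivity)]
    rw [hset, Set.ncard_image_of_injective _ hΦinj]
  -- Finset fibers
  set F : ℤ → Finset (Fin d → ℤ) := fun n => (fiberSet_finite hW ((n : ℝ) • α)).toFinset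
    with hFdef
  have hmemF : ∀ (n : ℤ) (m : Fin d → ℤ),
      m ∈ F n ↔ ((n : ℝ) • α + fun j => (m j : ℝ)) ∈ W := by
    intro n m
    rw [hFdef]
    simp [Set.Finite.mem_toFinset, fiberSet]
  have hFcard : ∀ n : ℤ, (F n).card ≤ M := by
    intro n
    have := hfib_le ((n : ℝ) • α)
    rwa [Set.ncard_eq_toFinset_card _ (fiberSet_finite hW ((n : ℝ) • α))] at this
  -- Q as a Finset
  set Qf : Finset (ℤ × (Fin d → ℤ)) :=
    (Finset.range N).biUnion (fun n => {((n : ℤ))} ×ˢ F ((n : ℤ))) with hQfdef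
  have hQcoe : Q = ↑Qf := by
    ext p
    simp only [hQdef, Set.mem_setOf_eq, hQfdef, Finset.coe_biUnion, Finset.mem_coe,
      Finset.mem_biUnion, Finset.mem_range, Finset.mem_product, Finset.mem_singleton,
      Set.mem_iUnion, Set.mem_Ico]
    constructor
    · rintro ⟨hw, h0, hN'⟩
      refine ⟨p.1.toNat, ?_, ?_, ?_⟩
      · omega
      · omega
      · have hp1 : ((p.1.toNat : ℤ)) = p.1 := by omega
        rw [hp1, hmemF]
        exact hw
    · rintro ⟨n, hn, hp1, hp2⟩
      rw [hmemF] at hp2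
      refine ⟨by rw [hp1]; exact hp2, by omega, by omega⟩
  have hQfin : Q.Finite := by rw [hQcoe]; exact Qf.finite_toSet
  have hQfcard : Qf.card = ∑ n ∈ Finset.range N, (F ((n : ℤ))).card := by
    rw [hQfdef]
    rw [Finset.card_biUnion]
    · refine Finset.sum_congr rfl fun n _ => ?_
      rw [Finset.card_product, Finset.card_singleton, one_mul]
    · intro i _ j _ hij
      simp only [Finset.disjoint_left, Finset.mem_product, Finset.mem_singleton]
      rintro p ⟨h1, -⟩ ⟨h2, -⟩
      exact hij (by omega)
  -- the Birkhoff sum equals #Q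
  have hsum : ∑ n ∈ Finset.range N, chiFun W ((n : ℝ) • α) = (Q.ncard : ℝ) := by
    rw [hQcoe, Set.ncard_coe_finset, hQfcard]
    push_cast
    refine Finset.sum_congr rfl fun n _ => ?_
    rw [chiFun_eq_ncard hW ((n : ℝ) • α)]
    congr 1
    have hx : (((n : ℤ) : ℝ)) • α = ((n : ℕ) : ℝ) • α := by norm_num
    rw [← hx]
    exact Set.ncard_eq_toFinset_card _ (fiberSet_finite hW _)
  -- the exceptional index set
  set E : Finset ℤ := Finset.Icc (-(c : ℤ)) (c : ℤ) ∪
    Finset.Icc ((N : ℤ) - c) ((N : ℤ) + c) with hEdef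
  set Rf : Finset (ℤ × (Fin d → ℤ)) := E.biUnion (fun n => {n} ×ˢ F n) with hRfdef
  have hmemRf : ∀ p : ℤ × (Fin d → ℤ),
      p.1 ∈ E → ((p.1 : ℝ) • α + fun j => (p.2 j : ℝ)) ∈ W → p ∈ Rf := by
    intro p hE hw
    rw [hRfdef]
    refine Finset.mem_biUnion.mpr ⟨p.1, hE, ?_⟩
    rw [Finset.mem_product, Finset.mem_singleton]
    exact ⟨rfl, (hmemF _ _).mpr hw⟩
  -- key: the sum bound for Φ
  have hΦbound : ∀ p : ℤ × (Fin d → ℤ),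
      ((p.1 : ℝ) • α + fun j => (p.2 j : ℝ)) ∈ W →
      |Φ p - (p.1 : ℝ)| ≤ B := by
    intro p hw
    have := hβw _ hw
    rw [hΦdef]
    simpa using this
  -- P \ Q ⊆ Rf
  have hPQ : ∀ p ∈ P, p ∉ Q → p ∈ Rf := by
    rintro p ⟨hw, hΦ0, hΦN⟩ hpQ
    have hb := hΦbound p hw
    rw [abs_le] at hb
    have hnQ : ¬(p.1 ∈ Set.Ico (0 : ℤ) (N : ℤ)) := fun h => hpQ ⟨hw, h⟩
    rw [Set.mem_Ico, not_and_or, not_le, not_lt] at hnQ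
    refine hmemRf p ?_ hw
    rw [hEdef, Finset.mem_union, Finset.mem_Icc, Finset.mem_Icc]
    have hub' : p.1 ≤ (N : ℤ) + (c : ℤ) := by
      have h2 : (p.1 : ℝ) < (((N : ℤ) + (c : ℤ) : ℤ) : ℝ) := by push_cast; linarith
      have h3 : p.1 < (N : ℤ) + (c : ℤ) := by exact_mod_cast h2
      omega
    have hlb' : -(c : ℤ) ≤ p.1 := by
      have h2 : ((-(c : ℤ) : ℤ) : ℝ) ≤ (p.1 : ℝ) := by push_cast; linarith
      exact_mod_cast h2
    rcases hnQ with h | h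
    · left; exact ⟨hlb', by omega⟩
    · right; exact ⟨by omega, hub'⟩
  -- Q \ P ⊆ Rf
  have hQP : ∀ p ∈ Q, p ∉ P → p ∈ Rf := by
    rintro p ⟨hw, h0, hN'⟩ hpP
    have hb := hΦbound p hw
    rw [abs_le] at hb
    have hnP : ¬(Φ p ∈ Set.Ico (0 : ℝ) (N : ℝ)) := fun h => hpP ⟨hw, h⟩
    rw [Set.mem_Ico, not_and_or, not_le, not_lt] at hnP
    refine hmemRf p ?_ hw
    rw [hEdef, Finset.mem_union, Finset.mem_Icc, Finset.mem_Icc]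
    rcases hnP with h | h
    · -- Φ p < 0, so p.1 < B ≤ c
      left
      have h2 : (p.1 : ℝ) < (((c : ℤ) : ℤ) : ℝ) := by push_cast; linarith
      have h1 : p.1 < (c : ℤ) := by exact_mod_cast h2
      exact ⟨by omega, by omega⟩
    · -- Φ p ≥ N, so p.1 ≥ N - B ≥ N - c
      right
      have h2 : ((((N : ℤ) - (c : ℤ)) : ℤ) : ℝ) ≤ (p.1 : ℝ) := by push_cast; linarith
      have h1 : (N : ℤ) - (c : ℤ) ≤ p.1 := by exact_mod_cast h2
      exact ⟨h1, by omega⟩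
  -- cardinality of Rf
  have hEcard : E.card ≤ 4 * c + 2 := by
    calc E.card ≤ (Finset.Icc (-(c : ℤ)) (c : ℤ)).card +
        (Finset.Icc ((N : ℤ) - c) ((N : ℤ) + c)).card := Finset.card_union_le _ _
    _ ≤ 4 * c + 2 := by
        rw [Int.card_Icc, Int.card_Icc]
        omega
  have hRfcard : Rf.card ≤ (4 * c + 2) * M := by
    calc Rf.card ≤ ∑ n ∈ E, ({n} ×ˢ F n).card := Finset.card_biUnion_le
    _ = ∑ n ∈ E, (F n).card := Finset.sum_congr rfl fun n _ => by
        rw [Finset.card_product, Finset.card_singleton, one_mul]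
    _ ≤ ∑ n ∈ E, M := Finset.sum_le_sum fun n _ => hFcard n
    _ = E.card * M := by rw [Finset.sum_const, smul_eq_mul]
    _ ≤ (4 * c + 2) * M := Nat.mul_le_mul_right _ hEcard
  -- combine
  have hPsub : P ⊆ Q ∪ ↑Rf := fun p hp => by
    by_cases h : p ∈ Q
    · exact Set.mem_union_left _ h
    · exact Set.mem_union_right _ (hPQ p hp h)
  have hQsub : Q ⊆ P ∪ ↑Rf := fun p hp => by
    by_cases h : p ∈ P
    · exact Set.mem_union_left _ h
    · exact Set.mem_union_right _ (hQP p hp h)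
  have hPfin : P.Finite := (hQfin.union Rf.finite_toSet).subset hPsub
  have hP_le : P.ncard ≤ Q.ncard + Rf.card := by
    calc P.ncard ≤ (Q ∪ ↑Rf).ncard :=
          Set.ncard_le_ncard hPsub (hQfin.union Rf.finite_toSet)
    _ ≤ Q.ncard + (↑Rf : Set (ℤ × (Fin d → ℤ))).ncard := Set.ncard_union_le _ _
    _ = Q.ncard + Rf.card := by rw [Set.ncard_coe_finset]
  have hQ_le : Q.ncard ≤ P.ncard + Rf.card := by
    calc Q.ncard ≤ (P ∪ ↑Rf).ncard :=
          Set.ncard_le_ncard hQsub (hPfin.union Rf.finite_toSet)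
    _ ≤ P.ncard + (↑Rf : Set (ℤ × (Fin d → ℤ))).ncard := Set.ncard_union_le _ _
    _ = P.ncard + Rf.card := by rw [Set.ncard_coe_finset]
  -- final estimate
  rw [hcount, hsum]
  rw [abs_sub_le_iff]
  have e1 : (P.ncard : ℝ) ≤ (Q.ncard : ℝ) + (Rf.card : ℝ) := by exact_mod_cast hP_le
  have e2 : (Q.ncard : ℝ) ≤ (P.ncard : ℝ) + (Rf.card : ℝ) := by exact_mod_cast hQ_le
  have e3 : (Rf.card : ℝ) ≤ (((4 * c + 2) * M : ℕ) : ℝ) := by exact_mod_cast hRfcard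
  constructor
  · push_cast
    push_cast at e1 e3
    linarith
  · push_cast
    push_cast at e2 e3
    linarith
end

section
/- Let H be a full-rank lattice in ℝ^n and X = ℝ^n/H the quotient torus. Let e_1, …, e_d ∈ X be elements whose generated subgroup M is dense in X, and write P_k = { Σ_{j=1}^d m_j e_j : m_1, …, m_d ∈ {0, 1, …, k−1} } (a multiset of at most k^d points of X, counted with multiplicity as a function of (m_1,…,m_d)). Let U ⊆ X be a set containing a nonempty open subset of X. Then there exist a constant c > 0 and a positive integer k₀ such that for every x ∈ X and every integer k > k₀, the number of tuples (m_1, …, m_d) ∈ {0, …, k−1}^d with x + Σ_j m_j e_j ∈ U is at least c k^d. -/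
set_option maxHeartbeats 1000000

open Submodule

lemma torus_compact {n : ℕ} (H : AddSubgroup (Fin n → ℝ)) (hdisc : DiscreteTopology H)
    (hspan : Submodule.span ℝ (H : Set (Fin n → ℝ)) = ⊤) :
    CompactSpace ((Fin n → ℝ) ⧸ H) := by
  set L : Submodule ℤ (Fin n → ℝ) := AddSubgroup.toIntSubmodule H with hLdef
  have hL : (L : Set (Fin n → ℝ)) = (H : Set (Fin n → ℝ)) := rfl
  have : DiscreteTopology L := hdisc
  have : IsZLattice ℝ L := ⟨by rw [hL]; exact hspan⟩
  have : Module.Free ℤ L := ZLattice.module_free ℝ L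
  have : Module.Finite ℤ L := ZLattice.module_finite ℝ L
  let b0 := Module.Free.chooseBasis ℤ L
  let b := b0.ofZLatticeBasis ℝ
  have hb : span ℤ (Set.range b) = L := b0.ofZLatticeBasis_span ℝ
  have hcomp : IsCompact (closure (ZSpan.fundamentalDomain b)) :=
    (ZSpan.fundamentalDomain_isBounded b).isCompact_closure
  constructor
  have : (Set.univ : Set ((Fin n → ℝ) ⧸ H)) =
      (QuotientAddGroup.mk : (Fin n → ℝ) → (Fin n → ℝ) ⧸ H) '' closure (ZSpan.fundamentalDomain b) := by
    refine subset_antisymm (fun y _ => ?_) (Set.subset_univ _)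
    obtain ⟨x, rfl⟩ := QuotientAddGroup.mk_surjective y
    refine ⟨ZSpan.fract b x, subset_closure (ZSpan.fract_mem_fundamentalDomain b x), ?_⟩
    refine (QuotientAddGroup.eq).mpr ?_
    have : -(ZSpan.fract b x) + x = (ZSpan.floor b x : Fin n → ℝ) := by
      rw [ZSpan.fract_apply]; abel
    rw [this]
    have h2 : (ZSpan.floor b x : Fin n → ℝ) ∈ span ℤ (Set.range ⇑b) := SetLike.coe_mem _
    have hset : ((span ℤ (Set.range ⇑b) : Submodule ℤ (Fin n → ℝ)) : Set (Fin n → ℝ))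
        = (H : Set (Fin n → ℝ)) := by rw [hb]; exact hL
    have h3 : (ZSpan.floor b x : Fin n → ℝ) ∈ (H : Set (Fin n → ℝ)) := hset ▸ h2
    exact h3
  rw [this]
  exact hcomp.image continuous_quotient_mk'

/-- Let `H` be a full-rank lattice in `ℝ^n` (a discrete subgroup spanning `ℝ^n`) and let
`X = ℝ^n/H` be the quotient torus. Suppose `e_1, …, e_d ∈ X` generate a dense subgroup
of `X`, and `U ⊆ X` contains a nonempty open set. Then there exist `c > 0` and `k₀` such
that for every `x ∈ X` and every `k > k₀`, the number of tuples
`(m_1, …, m_d) ∈ {0, …, k−1}^d` with `x + Σ_j m_j e_j ∈ U` is at least `c k^d`. -/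
theorem dense_orbit_box_count {n d : ℕ}
    (H : AddSubgroup (Fin n → ℝ)) (hdisc : DiscreteTopology H)
    (hspan : Submodule.span ℝ (H : Set (Fin n → ℝ)) = ⊤)
    (e : Fin d → (Fin n → ℝ) ⧸ H)
    (hdense : Dense ((AddSubgroup.closure (Set.range e) : AddSubgroup ((Fin n → ℝ) ⧸ H)) :
      Set ((Fin n → ℝ) ⧸ H)))
    (U : Set ((Fin n → ℝ) ⧸ H))
    (hU : ∃ V : Set ((Fin n → ℝ) ⧸ H), IsOpen V ∧ V.Nonempty ∧ V ⊆ U) :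
    ∃ c : ℝ, 0 < c ∧ ∃ k₀ : ℕ, ∀ x : (Fin n → ℝ) ⧸ H, ∀ k : ℕ, k₀ < k →
      c * (k : ℝ) ^ d ≤
        (({f : Fin d → Fin k | (x + ∑ j, (f j : ℕ) • e j) ∈ U}).ncard : ℝ) := by

  classical
  obtain ⟨V, hVopen, hVne, hVU⟩ := hU
  haveI hXcomp : CompactSpace ((Fin n → ℝ) ⧸ H) := torus_compact H hdisc hspan
  set M : AddSubgroup ((Fin n → ℝ) ⧸ H) := AddSubgroup.closure (Set.range e) with hM
  -- the cover
  have hcover : (Set.univ : Set ((Fin n → ℝ) ⧸ H)) ⊆ ⋃ g : M, (fun y => y + (g : (Fin n → ℝ) ⧸ H)) ⁻¹' V := by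
    intro x _
    obtain ⟨v, hv⟩ := hVne
    have hopen : IsOpen ((fun g : (Fin n → ℝ) ⧸ H => x + g) ⁻¹' V) :=
      hVopen.preimage (continuous_add_left x)
    have hne : ((fun g : (Fin n → ℝ) ⧸ H => x + g) ⁻¹' V).Nonempty := ⟨v - x, by simp [hv]⟩
    obtain ⟨g, hgM, hgV⟩ := hdense.exists_mem_open hopen hne
    exact Set.mem_iUnion.mpr ⟨⟨g, hgM⟩, hgV⟩
  obtain ⟨s, hs⟩ := isCompact_univ.elim_finite_subcover
    (fun g : M => (fun y => y + (g : (Fin n → ℝ) ⧸ H)) ⁻¹' V)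
    (fun g => hVopen.preimage (continuous_add_right _)) hcover
  have key : ∀ y : (Fin n → ℝ) ⧸ H, ∃ i : M, i ∈ s ∧ y + (i : (Fin n → ℝ) ⧸ H) ∈ V := by
    intro y
    have := hs (Set.mem_univ y)
    simp only [Set.mem_iUnion, Set.mem_preimage] at this
    obtain ⟨i, hi, hiv⟩ := this
    exact ⟨i, hi, hiv⟩
  choose I hIs hIV using key
  -- integer coefficients for elements of M
  have hcoeff : ∀ g : M, ∃ c : Fin d → ℤ, ∑ j, c j • e j = (g : (Fin n → ℝ) ⧸ H) := by
    intro g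
    have hg : (g : (Fin n → ℝ) ⧸ H) ∈ Submodule.span ℤ (Set.range e) := by
      have : (g : (Fin n → ℝ) ⧸ H) ∈ (Submodule.span ℤ (Set.range e)).toAddSubgroup := by
        rw [Submodule.span_int_eq_addSubgroupClosure]; exact g.2
      exact this
    exact (mem_span_range_iff_exists_fun ℤ).mp hg
  choose a ha using hcoeff
  set A : ℕ := s.sup (fun g => ∑ j, (a g j).natAbs) with hA
  have habs : ∀ g ∈ s, ∀ j, (a g j).natAbs ≤ A := by
    intro g hg j
    refine le_trans ?_ (Finset.le_sup hg)
    exact Finset.single_le_sum (f := fun j => (a g j).natAbs) (fun _ _ => Nat.zero_le _)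
      (Finset.mem_univ j)
  refine ⟨(2 ^ d * (s.card + 1) : ℝ)⁻¹, by positivity, 4 * A + 1, ?_⟩
  intro x k hk
  have hk2 : 2 * A < k := by omega
  -- the inner box and the map Φ
  set km := k - 2 * A with hkm
  have hkm' : km + 2 * A = k := by omega
  let y : (Fin d → Fin km) → (Fin n → ℝ) ⧸ H := fun m => x + ∑ j, ((m j : ℕ) + A) • e j
  let i : (Fin d → Fin km) → M := fun m => I (y m)
  have hz1 : ∀ (m : Fin d → Fin km) (j : Fin d),
      0 ≤ ((m j : ℕ) + A : ℤ) + a (i m) j := by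
    intro m j
    have := habs (i m) (hIs (y m)) j
    omega
  have hz2 : ∀ (m : Fin d → Fin km) (j : Fin d),
      (((m j : ℕ) + A : ℤ) + a (i m) j).toNat < k := by
    intro m j
    have h1 := habs (i m) (hIs (y m)) j
    have h2 : (m j : ℕ) < km := (m j).2
    omega
  let Φ : (Fin d → Fin km) → (Fin d → Fin k) := fun m j =>
    ⟨(((m j : ℕ) + A : ℤ) + a (i m) j).toNat, hz2 m j⟩
  -- Φ lands in the good set
  have hΦmem : ∀ m, (x + ∑ j, ((Φ m j : ℕ)) • e j) ∈ U := by
    intro m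
    apply hVU
    have hsum : ∑ j, ((Φ m j : ℕ)) • e j
        = (∑ j, ((m j : ℕ) + A) • e j) + ∑ j, a (i m) j • e j := by
      rw [← Finset.sum_add_distrib]
      refine Finset.sum_congr rfl fun j _ => ?_
      have : ((Φ m j : ℕ) : ℤ) = ((m j : ℕ) + A : ℤ) + a (i m) j :=
        Int.toNat_of_nonneg (hz1 m j)
      calc ((Φ m j : ℕ)) • e j = (((Φ m j : ℕ) : ℤ)) • e j := (natCast_zsmul _ _).symm
        _ = (((m j : ℕ) + A : ℤ) + a (i m) j) • e j := by rw [this]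
        _ = (((m j : ℕ) + A : ℤ)) • e j + (a (i m) j) • e j := add_zsmul _ _ _
        _ = ((m j : ℕ) + A) • e j + (a (i m) j) • e j := by
            congr 1
    rw [hsum, ha (i m)]
    have := hIV (y m)
    show x + ((∑ j, ((m j : ℕ) + A) • e j) + (i m : (Fin n → ℝ) ⧸ H)) ∈ V
    rw [← add_assoc]
    exact this
  -- fibers of Φ have size at most s.card
  let G : Finset (Fin d → Fin k) :=
    Finset.univ.filter (fun f => (x + ∑ j, ((f j : ℕ)) • e j) ∈ U)
  have hmaps : ∀ m ∈ (Finset.univ : Finset (Fin d → Fin km)), Φ m ∈ G := by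
    intro m _
    simp only [G, Finset.mem_filter, Finset.mem_univ, true_and]
    exact hΦmem m
  have hfiber : ∀ f ∈ G,
      (Finset.univ.filter (fun m => Φ m = f)).card ≤ s.card + 1 := by
    intro f _
    have hinj : Set.InjOn (fun m => i m)
        ((Finset.univ.filter (fun m => Φ m = f)) : Finset (Fin d → Fin km)) := by
      intro m1 h1 m2 h2 hi
      simp only [Finset.coe_filter, Set.mem_setOf_eq] at h1 h2
      funext j
      have e1 : Φ m1 j = f j := by rw [h1.2]
      have e2 : Φ m2 j = f j := by rw [h2.2]
      have e3 : (Φ m1 j : ℕ) = (Φ m2 j : ℕ) := by rw [e1, e2]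
      simp only [Φ] at e3
      have g1 := hz1 m1 j
      have g2 := hz1 m2 j
      have hi' : i m1 = i m2 := hi
      have : a (i m1) j = a (i m2) j := by rw [hi']
      apply Fin.ext
      omega
    calc (Finset.univ.filter (fun m => Φ m = f)).card
        ≤ s.card := by
          refine Finset.card_le_card_of_injOn (fun m => i m) ?_ hinj
          intro m _
          exact hIs (y m)
      _ ≤ s.card + 1 := Nat.le_succ _
  have hcount : km ^ d ≤ (s.card + 1) * G.card := by
    have := Finset.card_le_mul_card_image_of_maps_to hmaps (s.card + 1) hfiber
    simpa [Finset.card_univ] using this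
  -- translate to ncard and reals
  have hncard : ({f : Fin d → Fin k | (x + ∑ j, (f j : ℕ) • e j) ∈ U}).ncard = G.card := by
    rw [Set.ncard_eq_toFinset_card']
    congr 1
    ext f
    simp [G]
  rw [hncard]
  have hkmR : ((k : ℝ) / 2) ≤ (km : ℝ) := by
    have : (km : ℝ) = (k : ℝ) - 2 * A := by
      push_cast [hkm, Nat.cast_sub (le_of_lt hk2)]; ring
    rw [this]
    have : (4 * A + 1 : ℝ) < k := by exact_mod_cast hk
    linarith
  have hGcard : ((km : ℝ)) ^ d ≤ (s.card + 1 : ℝ) * G.card := by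
    exact_mod_cast hcount
  have hpow : ((k : ℝ) / 2) ^ d ≤ (km : ℝ) ^ d := by
    apply pow_le_pow_left₀ (by positivity) hkmR
  have hsc : (0 : ℝ) < (s.card + 1 : ℝ) := by positivity
  rw [div_pow] at hpow
  have h2d : (0:ℝ) < (2:ℝ)^d := by positivity
  rw [inv_mul_le_iff₀ (by positivity)]
  calc (k : ℝ) ^ d = ((k:ℝ)^d / 2^d) * 2^d := by field_simp
    _ ≤ (km : ℝ) ^ d * 2 ^ d := by nlinarith [pow_nonneg (Nat.cast_nonneg k : (0:ℝ) ≤ k) d]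
    _ ≤ ((s.card + 1 : ℝ) * G.card) * 2 ^ d := by nlinarith
    _ = 2 ^ d * ((s.card : ℝ) + 1) * G.card := by ring
end

section
/- Let X be a set endowed with an action of a group G, and let A, B ⊆ X. If there exists a finite set F ⊆ G and an injective map φ : A → B such that φ(a) ∈ F · a for every a ∈ A, and an injective map ψ : B → A such that ψ(b) ∈ F⁻¹ · b for every b ∈ B, then there exists a bijection χ : A → B such that χ(a) ∈ F · a for all a ∈ A; consequently, A and B are G-equidecomposable using only actions of elements of F. -/
open Pointwise

/-- If there are injections `φ : A → B` and `ψ : B → A` with `φ(a) ∈ F · a` and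
`ψ(b) ∈ F⁻¹ · b` for a finite set `F ⊆ G`, then there is a bijection `χ : A → B` with
`χ(a) ∈ F · a` for all `a ∈ A`; consequently `A` and `B` are `G`-equidecomposable
using only actions of elements of `F`. -/
theorem schroeder_bernstein_equidecomposable {X G : Type*} [Group G] [MulAction G X]
    (A B : Set X) (F : Finset G)
    (φ : A → B) (hφinj : Function.Injective φ)
    (hφ : ∀ a : A, ∃ g ∈ F, (φ a : X) = g • (a : X))
    (ψ : B → A) (hψinj : Function.Injective ψ)
    (hψ : ∀ b : B, ∃ g ∈ F, (ψ b : X) = g⁻¹ • (b : X)) :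
    (∃ χ : A → B, Function.Bijective χ ∧ ∀ a : A, ∃ g ∈ F, (χ a : X) = g • (a : X)) ∧
      EquidecomposableUsing F A B := by
  classical
  -- Step 1: the Schröder–Bernstein set
  set s : Set A := ⋃ n, (ψ ∘ φ)^[n] '' (Set.range ψ)ᶜ with hs
  have hs0 : (Set.range ψ)ᶜ ⊆ s := by
    intro a ha
    exact Set.mem_iUnion.2 ⟨0, by simpa using ha⟩
  have hstep : ∀ a ∈ s, ψ (φ a) ∈ s := by
    intro a ha
    obtain ⟨n, x, hx, hxe⟩ : ∃ n x, x ∈ (Set.range ψ)ᶜ ∧ (ψ ∘ φ)^[n] x = a := by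
      simpa [hs, Set.mem_iUnion, Set.mem_image] using ha
    refine Set.mem_iUnion.2 ⟨n + 1, x, hx, ?_⟩
    rw [Function.iterate_succ_apply', hxe]
    rfl
  have hrange : ∀ a : A, a ∉ s → ∃ b, ψ b = a := by
    intro a ha
    by_contra h
    exact ha (hs0 (by simpa [Set.mem_range] using h))
  let χ : A → B := fun a => if h : a ∈ s then φ a else (hrange a h).choose
  have hχ_in : ∀ a (h : a ∈ s), χ a = φ a := fun a h => dif_pos h
  have hχ_out : ∀ a (h : a ∉ s), ψ (χ a) = a := by
    intro a h
    have : χ a = (hrange a h).choose := dif_neg h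
    rw [this]
    exact (hrange a h).choose_spec
  have hχinj : Function.Injective χ := by
    intro a₁ a₂ heq
    by_cases h1 : a₁ ∈ s <;> by_cases h2 : a₂ ∈ s
    · exact hφinj (by rw [← hχ_in a₁ h1, ← hχ_in a₂ h2, heq])
    · exfalso
      apply h2
      have : ψ (φ a₁) = a₂ := by rw [← hχ_in a₁ h1, heq, hχ_out a₂ h2]
      exact this ▸ hstep a₁ h1
    · exfalso
      apply h1
      have : ψ (φ a₂) = a₁ := by rw [← hχ_in a₂ h2, ← heq, hχ_out a₁ h1]
      exact this ▸ hstep a₂ h2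
    · rw [← hχ_out a₁ h1, ← hχ_out a₂ h2, heq]
  have hχsurj : Function.Surjective χ := by
    intro b
    by_cases h : ψ b ∈ s
    · obtain ⟨n, x, hx, hxe⟩ : ∃ n x, x ∈ (Set.range ψ)ᶜ ∧ (ψ ∘ φ)^[n] x = ψ b := by
        simpa [hs, Set.mem_iUnion, Set.mem_image] using h
      cases n with
      | zero =>
        simp only [Function.iterate_zero, id] at hxe
        exact absurd (Set.mem_range_self b) (hxe ▸ hx)
      | succ k =>
        set a : A := (ψ ∘ φ)^[k] x with ha
        have has : a ∈ s := Set.mem_iUnion.2 ⟨k, x, hx, rfl⟩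
        have : ψ (φ a) = ψ b := by
          rw [← hxe, Function.iterate_succ_apply']
          rfl
        refine ⟨a, ?_⟩
        rw [hχ_in a has]
        exact hψinj this
    · exact ⟨ψ b, hψinj (hχ_out (ψ b) h)⟩
  have hF : ∀ a : A, ∃ g ∈ F, (χ a : X) = g • (a : X) := by
    intro a
    by_cases h : a ∈ s
    · rw [hχ_in a h]; exact hφ a
    · obtain ⟨g, hg, hge⟩ := hψ (χ a)
      refine ⟨g, hg, ?_⟩
      have : ((ψ (χ a) : A) : X) = g⁻¹ • (χ a : X) := hge
      rw [hχ_out a h] at this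
      rw [this, smul_inv_smul]
  -- Step 2: equidecomposability
  refine ⟨⟨χ, ⟨hχinj, hχsurj⟩, hF⟩, ?_⟩
  let e : {g // g ∈ F} ≃ Fin F.card := F.equivFin
  let idx : A → Fin F.card := fun a => e ⟨(hF a).choose, (hF a).choose_spec.1⟩
  have hkey : ∀ (i : Fin F.card) (a : A), idx a = i → ((e.symm i : G) • (a : X)) = (χ a : X) := by
    intro i a hi
    subst hi
    have h1 : e.symm (idx a) = ⟨(hF a).choose, (hF a).choose_spec.1⟩ := e.symm_apply_apply _
    rw [h1]
    exact ((hF a).choose_spec.2).symm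
  refine ⟨F.card, fun i => {x : X | ∃ hx : x ∈ A, idx ⟨x, hx⟩ = i},
    fun i => (e.symm i : G), fun i => (e.symm i).2, ⟨?_, ?_⟩, ⟨?_, ?_⟩⟩
  · ext x
    simp only [Set.mem_iUnion, Set.mem_setOf_eq]
    exact ⟨fun ⟨i, hx, _⟩ => hx, fun hx => ⟨idx ⟨x, hx⟩, hx, rfl⟩⟩
  · intro i j hij
    rw [Function.onFun, Set.disjoint_left]
    rintro x ⟨hx1, h1⟩ ⟨hx2, h2⟩
    exact hij (h1.symm.trans h2)
  · ext y
    simp only [Set.mem_iUnion]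
    constructor
    · rintro ⟨i, hy⟩
      obtain ⟨x, ⟨hx, hidx⟩, rfl⟩ := hy
      have := hkey i ⟨x, hx⟩ hidx
      have hgoal : (e.symm i : G) • x ∈ B := by
        rw [this]; exact (χ ⟨x, hx⟩).2
      exact hgoal
    · intro hy
      obtain ⟨a, ha⟩ := hχsurj ⟨y, hy⟩
      refine ⟨idx a, Set.mem_smul_set.2 ⟨(a : X), ⟨a.2, rfl⟩, ?_⟩⟩
      rw [hkey (idx a) a rfl, ha]
  · intro i j hij
    rw [Function.onFun, Set.disjoint_left]
    rintro y hyi hyj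
    obtain ⟨x, ⟨hx, h1⟩, rfl⟩ := Set.mem_smul_set.1 hyi
    obtain ⟨x', ⟨hx', h2⟩, heq⟩ := Set.mem_smul_set.1 hyj
    have e1 := hkey i ⟨x, hx⟩ h1
    have e2 := hkey j ⟨x', hx'⟩ h2
    have : χ ⟨x', hx'⟩ = χ ⟨x, hx⟩ := Subtype.ext (by rw [← e1, ← e2, heq])
    have hxx := hχinj this
    apply hij
    rw [← h1, ← h2, hxx]
end
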